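/- arXiv:2602.11502 — 4 statements merged into one kernel-verified Lean document; each statement's English description precedes it below -/
import Mathlib

section
/- Let r ≥ 2 be an integer and F a graph with ex(n,F) = t_r(n) + O(1), and let c0 = limsup_{n→∞}(ex(n,F) − t_r(n)). Then for all sufficiently large n, ex(n,F) = t_r(n) + c0; in particular the sequence ex(n,F) − t_r(n) is eventually constant. -/
open Finset SimpleGraph
open scoped Classical

/-- `F` has a copy in `G`: an injective graph homomorphism. -/
def SimpleGraph.ContainsCopy {α β : Type*} (F : SimpleGraph α) (G : SimpleGraph β) : Prop :=
  ∃ f : F →g G, Function.Injective f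

/-- `G` is `F`-free. -/
def SimpleGraph.CopyFree {α β : Type*} (F : SimpleGraph α) (G : SimpleGraph β) : Prop :=
  ¬ F.ContainsCopy G

/-- Number of edges of a graph. -/
noncomputable def edgeCount {V : Type*} (G : SimpleGraph V) : ℕ := G.edgeSet.ncard

/-- Degree of a vertex. -/
noncomputable def degCount {V : Type*} (G : SimpleGraph V) (v : V) : ℕ := (G.neighborSet v).ncard

/-- Turán number: max number of edges of an F-free graph on n vertices. -/
noncomputable def exNum {α : Type*} (F : SimpleGraph α) (n : ℕ) : ℕ :=
  sSup {m | ∃ G : SimpleGraph (Fin n), F.CopyFree G ∧ edgeCount G = m}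

/-- Number of edges of the Turán graph `T_r(n)`. -/
noncomputable def turanNum (r n : ℕ) : ℕ := edgeCount (turanGraph n r)

/-- The hypothesis `ex(n,F) = t_r(n) + O(1)`. -/
def ExIsTuranPlusO1 {α : Type*} (F : SimpleGraph α) (r : ℕ) : Prop :=
  ∃ C : ℤ, ∀ n : ℕ, |(exNum F n : ℤ) - (turanNum r n : ℤ)| ≤ C

/-- `c0 = limsup (ex(n,F) - t_r(n))`. -/
noncomputable def exC0 {α : Type*} (F : SimpleGraph α) (r : ℕ) : ℤ :=
  Filter.limsup (fun n : ℕ => (exNum F n : ℤ) - (turanNum r n : ℤ)) Filter.atTop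

/-- The signless Laplacian matrix `Q(G) = D(G) + A(G)` of a graph. -/
noncomputable def signlessLaplacian {V : Type*} (G : SimpleGraph V) : Matrix V V ℝ :=
  Matrix.of fun u v =>
    (if u = v then (degCount G u : ℝ) else 0) + (if G.Adj u v then 1 else 0)

/-- The signless Laplacian spectral radius `q(G)`: the largest eigenvalue of `Q(G)`. -/
noncomputable def qRad {V : Type*} [Fintype V] [DecidableEq V] (G : SimpleGraph V) : ℝ :=
  sSup (spectrum ℝ (signlessLaplacian G))

/-- Number of edges of `G` with both endpoints in `s`. -/
noncomputable def edgesInside {V : Type*} (G : SimpleGraph V) (s : Set V) : ℕ :=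
  {e ∈ G.edgeSet | ∀ v ∈ e, v ∈ s}.ncard

/-- `e(G_in)` for a partition `P`. -/
noncomputable def edgesIn {V : Type*} (G : SimpleGraph V) {r : ℕ} (P : Fin r → Finset V) : ℕ :=
  ∑ i, edgesInside G (P i)

/-- `e(G_out)`: missing cross pairs for a partition `P`. -/
noncomputable def missingCross {V : Type*} (G : SimpleGraph V) {r : ℕ} (P : Fin r → Finset V) : ℕ :=
  {e : Sym2 V | ¬ e.IsDiag ∧ e ∉ G.edgeSet ∧ ¬ ∃ i, ∀ v ∈ e, v ∈ P i}.ncard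

/-- `P` is a partition of the vertex set into `r` parts. -/
def IsVertexPartition {V : Type*} {r : ℕ} (P : Fin r → Finset V) : Prop :=
  (∀ i j, i ≠ j → Disjoint (P i) (P j)) ∧ ∀ v, ∃ i, v ∈ P i


/-- count of `w < m` with `w % r = i`. -/
def cntmod (m r i : ℕ) : ℕ := ((Finset.range m).filter (fun w => w % r = i)).card

lemma cntmod_succ (m r i : ℕ) :
    cntmod (m+1) r i = cntmod m r i + (if m % r = i then 1 else 0) := by
  unfold cntmod
  rw [Finset.range_add_one, Finset.filter_insert]
  split <;> simp [Finset.card_insert_of_notMem, Finset.notMem_range_self]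

lemma aux_dvd (m r i : ℕ) (hi : i < r) : r ∣ (m + r - i) ↔ m % r = i := by
  constructor
  · rintro ⟨k, hk⟩
    rcases Nat.lt_or_ge m i with h | h
    · exfalso
      have h2 : 0 < m + r - i := by omega
      have := Nat.le_of_dvd h2 ⟨k, hk⟩
      omega
    · rcases k with _ | k
      · omega
      · have hm : m = i + r * k := by
          rw [Nat.mul_succ] at hk; omega
        rw [hm, Nat.add_mul_mod_self_left, Nat.mod_eq_of_lt hi]
  · intro h
    have h1 : i ≤ m := h ▸ Nat.mod_le m r
    have h2 := Nat.div_add_mod m r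
    exact ⟨m / r + 1, by rw [Nat.mul_add, Nat.mul_one]; omega⟩

lemma cntmod_formula (m r i : ℕ) (hi : i < r) :
    cntmod m r i = (m + r - 1 - i) / r := by
  induction m with
  | zero =>
    simp only [cntmod, Finset.range_zero, Finset.filter_empty, Finset.card_empty]
    rw [Nat.div_eq_of_lt (by omega)]
  | succ m ih =>
    rw [cntmod_succ, ih]
    have h1 : m + 1 + r - 1 - i = (m + r - 1 - i) + 1 := by omega
    have h2 : m + r - 1 - i + 1 = m + r - i := by omega
    rw [h1, Nat.succ_div, h2]
    congr 1
    simp [aux_dvd m r i hi]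

lemma cntmod_sum (m r : ℕ) (hr : 0 < r) : ∑ i ∈ Finset.range r, cntmod m r i = m := by
  unfold cntmod
  rw [← Finset.card_eq_sum_card_fiberwise (f := fun w => w % r) (t := Finset.range r)
    (fun x _ => Finset.mem_range.2 (Nat.mod_lt x hr)), Finset.card_range]

-- A' facts
lemma cntmod_le (m r i : ℕ) (hi : i < r) (hm : 1 ≤ m) :
    cntmod m r i ≤ cntmod m r ((m-1) % r) ∧ cntmod m r ((m-1) % r) ≤ cntmod m r i + 1 := by
  have hr : 0 < r := by omega
  have h1 : (m-1) % r < r := Nat.mod_lt _ hr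
  rw [cntmod_formula m r i hi, cntmod_formula m r _ h1]
  have h2 : m + r - 1 - (m-1) % r = r * ((m-1)/r) + r := by
    have := Nat.div_add_mod (m-1) r; omega
  rw [h2]
  have h3 : (r * ((m-1)/r) + r) / r = (m-1)/r + 1 := by
    rw [Nat.add_div_right _ hr, Nat.mul_div_cancel_left _ hr]
  rw [h3]
  constructor
  · calc (m + r - 1 - i) / r ≤ (m + r - 1) / r := Nat.div_le_div_right (by omega)
      _ = (m - 1) / r + 1 := by
          have : m + r - 1 = (m - 1) + r := by omega
          rw [this, Nat.add_div_right _ hr]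
  · have : (m - 1) / r ≤ (m + r - 1 - i) / r := Nat.div_le_div_right (by omega)
    omega

lemma cntmod_last_big (m r : ℕ) (hm : 1 ≤ m) (hr : 0 < r) :
    m ≤ r * cntmod m r ((m-1) % r) := by
  have h1 : (m-1) % r < r := Nat.mod_lt _ hr
  rw [cntmod_formula m r _ h1]
  have h2 : m + r - 1 - (m-1) % r = r * ((m-1)/r) + r := by
    have := Nat.div_add_mod (m-1) r; omega
  rw [h2, Nat.add_div_right _ hr, Nat.mul_div_cancel_left _ hr]
  rw [Nat.mul_add, Nat.mul_one]
  have := Nat.div_add_mod (m-1) r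
  have := Nat.mod_lt (m-1) hr
  omega


lemma edgeCount_eq {V : Type*} (G : SimpleGraph V) [Fintype G.edgeSet] :
    edgeCount G = G.edgeFinset.card := by
  rw [edgeCount, ← SimpleGraph.coe_edgeFinset, Set.ncard_coe_finset]

lemma card_fin_filter (m : ℕ) (P : ℕ → Prop) :
    ((Finset.univ : Finset (Fin m)).filter (fun w => P w.val)).card
      = ((Finset.range m).filter P).card := by
  apply Finset.card_bij (fun w _ => w.val)
  · intro a ha
    simp only [Finset.mem_filter, Finset.mem_range] at *
    exact ⟨a.isLt, ha.2⟩
  · intro a _ b _ h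
    exact Fin.val_injective h
  · intro b hb
    simp only [Finset.mem_filter, Finset.mem_range] at hb
    exact ⟨⟨b, hb.1⟩, by simp [hb.2]⟩

lemma turan_deg (m r : ℕ) (hr : 0 < r) (v : Fin m) :
    (turanGraph m r).degree v + cntmod m r ((v : ℕ) % r) = m := by
  classical
  have h1 : (turanGraph m r).degree v
      = ((Finset.univ : Finset (Fin m)).filter (fun w : Fin m => ¬ ((w : ℕ) % r = (v : ℕ) % r))).card := by
    rw [SimpleGraph.degree]
    congr 1
    rw [SimpleGraph.neighborFinset_eq_filter]
    apply Finset.filter_congr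
    intro w _
    simp only [turanGraph]
    constructor
    · exact fun h => fun h' => h h'.symm
    · exact fun h => fun h' => h h'.symm
  have h2 : cntmod m r ((v : ℕ) % r)
      = ((Finset.univ : Finset (Fin m)).filter (fun w : Fin m => (w : ℕ) % r = (v : ℕ) % r)).card := by
    unfold cntmod
    have h := (card_fin_filter m (fun w => w % r = (v : ℕ) % r)).symm
    convert h using 2 <;> (ext x; simp)
  rw [h1, h2, add_comm]
  rw [Finset.card_filter_add_card_filter_not]
  simp

set_option maxHeartbeats 1000000 in
lemma turan_handshake (m r : ℕ) (hr : 0 < r) :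
    2 * turanNum r m + ∑ i ∈ Finset.range r, (cntmod m r i) * (cntmod m r i) = m * m := by
  classical
  have hs : ∑ v : Fin m, (turanGraph m r).degree v = 2 * (turanGraph m r).edgeFinset.card :=
    SimpleGraph.sum_degrees_eq_twice_card_edges _
  have hfib : ∑ v : Fin m, cntmod m r ((v : ℕ) % r)
      = ∑ i ∈ Finset.range r, (cntmod m r i) * (cntmod m r i) := by
    have : ∑ v : Fin m, cntmod m r ((v : ℕ) % r)
        = ∑ w ∈ Finset.range m, cntmod m r (w % r) := by
      rw [← Fin.sum_univ_eq_sum_range]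
    rw [this]
    rw [← Finset.sum_fiberwise_of_maps_to (t := Finset.range r) (g := fun w => w % r)
      (fun x _ => Finset.mem_range.2 (Nat.mod_lt x hr)) (fun w => cntmod m r (w % r))]
    apply Finset.sum_congr rfl
    intro i hi
    have : ∀ w ∈ (Finset.range m).filter (fun w => w % r = i),
        cntmod m r (w % r) = cntmod m r i := by
      intro w hw
      simp only [Finset.mem_filter] at hw
      rw [hw.2]
    rw [Finset.sum_congr rfl this, Finset.sum_const, smul_eq_mul]
    rfl
  have : ∑ v : Fin m, ((turanGraph m r).degree v + cntmod m r ((v : ℕ) % r)) = m * m := by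
    rw [Finset.sum_congr rfl (fun v _ => turan_deg m r hr v), Finset.sum_const, smul_eq_mul]
    simp [Fintype.card_fin]
  rw [Finset.sum_add_distrib, hs, hfib] at this
  rw [turanNum, edgeCount_eq]
  exact this

lemma sum_sq_cast (m r : ℕ) : ((∑ i ∈ Finset.range r, cntmod m r i * cntmod m r i : ℕ) : ℤ)
    = ∑ i ∈ Finset.range r, (cntmod m r i : ℤ) * (cntmod m r i : ℤ) := by
  push_cast; ring

set_option maxHeartbeats 1000000 in
lemma turan_key (r : ℕ) (hr : 2 ≤ r) (C' : ℕ) (n : ℕ) (hn : 2*C'*r + r ≤ n + 1) :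
    2 * ((turanNum r (n+1) : ℤ)) + 2 * (C' : ℤ)
      < ((n+1 : ℕ) : ℤ) * (((turanNum r (n+1) : ℤ) - (turanNum r n : ℤ)) + 1) := by
  have hr0 : 0 < r := by omega
  set m := n + 1 with hm
  set c : ℕ → ℤ := fun i => (cntmod m r i : ℤ) with hc
  set c' : ℕ → ℤ := fun i => (cntmod n r i : ℤ) with hc'
  set i0 := n % r with hi0
  have hi0r : i0 ∈ Finset.range r := Finset.mem_range.2 (Nat.mod_lt n hr0)
  set A : ℤ := c i0 with hA
  -- identities
  have Hm : 2 * (turanNum r m : ℤ) + ∑ i ∈ Finset.range r, c i * c i = (m : ℤ) * m := by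
    have := turan_handshake m r hr0
    have := congrArg (fun x : ℕ => (x : ℤ)) this
    push_cast at this
    convert this using 2
  have Hn : 2 * (turanNum r n : ℤ) + ∑ i ∈ Finset.range r, c' i * c' i = (n : ℤ) * n := by
    have := turan_handshake n r hr0
    have := congrArg (fun x : ℕ => (x : ℤ)) this
    push_cast at this
    convert this using 2
  -- step
  have Hstep : ∑ i ∈ Finset.range r, c i * c i
      = (∑ i ∈ Finset.range r, c' i * c' i) + 2 * c' i0 + 1 := by
    have h1 : ∀ i ∈ Finset.range r, c i * c i
        = c' i * c' i + (if i0 = i then 2 * c' i + 1 else 0) := by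
      intro i _
      have := cntmod_succ n r i
      by_cases h : i0 = i
      · simp only [hc, hc', hm, this, ← hi0, if_pos h, h, if_pos rfl]
        push_cast
        ring
      · have h' : ¬ (n % r = i) := by rw [← hi0]; exact h
        simp only [hc, hc', hm, this, if_neg h', if_neg h]
        push_cast
        ring
    rw [Finset.sum_congr rfl h1, Finset.sum_add_distrib, Finset.sum_ite_eq, if_pos hi0r]
    ring
  -- bounds
  have hAub : ∀ i ∈ Finset.range r, c i ≤ A ∧ A ≤ c i + 1 := by
    intro i hi
    have := cntmod_le m r i (Finset.mem_range.1 hi) (by omega)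
    have hmn : m - 1 = n := by omega
    rw [hmn] at this
    constructor
    · simp only [hA, hc, hi0]
      exact_mod_cast this.1
    · simp only [hA, hc, hi0]
      exact_mod_cast this.2
  have hrA : (m : ℤ) ≤ r * A := by
    have := cntmod_last_big m r (by omega) hr0
    have hmn : m - 1 = n := by omega
    rw [hmn] at this
    simp only [hA, hc, hi0]
    exact_mod_cast this
  have hsum : ∑ i ∈ Finset.range r, c i = (m : ℤ) := by
    have := cntmod_sum m r hr0
    have := congrArg (fun x : ℕ => (x : ℤ)) this
    push_cast at this
    convert this using 2
  -- A > 2C'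
  have hA2C : 2 * (C' : ℤ) < A := by
    have h1 : (2*C'+1 : ℤ) * r ≤ (m : ℤ) := by
      have hh : (2*C'+1) * r = 2*C'*r + r := by ring
      exact_mod_cast (by rw [hh]; omega : (2*C'+1) * r ≤ m)
    have h2 : (2*C'+1 : ℤ) * r ≤ r * A := le_trans h1 hrA
    have hrpos : (0:ℤ) < r := by exact_mod_cast hr0
    nlinarith
  -- main sum inequality : S + m ≥ m*A + A
  have hS : (m : ℤ) * A + A ≤ (∑ i ∈ Finset.range r, c i * c i) + m := by
    have hsplit := (Finset.add_sum_erase (Finset.range r) (fun i => c i * c i) hi0r).symm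
    have hsplit2 := (Finset.add_sum_erase (Finset.range r) c hi0r).symm
    have herase : ∀ i ∈ (Finset.range r).erase i0, (A - 1) * c i ≤ c i * c i := by
      intro i hi
      have hi' := Finset.mem_of_mem_erase hi
      obtain ⟨h1, h2⟩ := hAub i hi'
      have hpos : (0:ℤ) ≤ c i := by simp only [hc]; exact Int.natCast_nonneg _
      nlinarith
    have h3 : (A - 1) * ∑ i ∈ (Finset.range r).erase i0, c i
        ≤ ∑ i ∈ (Finset.range r).erase i0, c i * c i := by
      rw [Finset.mul_sum]
      exact Finset.sum_le_sum herase
    have h4 : ∑ i ∈ (Finset.range r).erase i0, c i = (m : ℤ) - A := by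
      linarith [hsplit2, hsum, hA]
    rw [h4] at h3
    have h5 : A * A + (A - 1) * ((m:ℤ) - A) ≤ ∑ i ∈ Finset.range r, c i * c i := by
      rw [hsplit]
      have hAA : A * A = c i0 * c i0 := by rw [hA]
      linarith
    nlinarith [h5]
  -- conclude
  have hnat0 : cntmod m r i0 = cntmod n r i0 + 1 := by
    rw [cntmod_succ, if_pos rfl]
  have hstep0 : c i0 = c' i0 + 1 := by simp [hc, hc', hnat0]
  have hmZ : (m : ℤ) = (n : ℤ) + 1 := by rw [hm]; push_cast; ring
  have hsq : (m : ℤ) * m = (n:ℤ)*n + 2*n + 1 := by rw [hmZ]; ring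
  have ht : (turanNum r m : ℤ) - (turanNum r n : ℤ) = (m : ℤ) - A := by
    linarith [Hm, Hn, Hstep, hstep0, hsq]
  rw [ht]
  have expand : ((m:ℤ)) * ((m:ℤ) - A + 1) = (m:ℤ)*(m:ℤ) - (m:ℤ)*A + m := by ring
  linarith [Hm, hS, hA2C, expand]




lemma exSet_bdd {α : Type*} (F : SimpleGraph α) (n : ℕ) :
    BddAbove {m | ∃ G : SimpleGraph (Fin n), F.CopyFree G ∧ edgeCount G = m} := by
  refine ⟨n.choose 2, ?_⟩
  rintro x ⟨G, -, rfl⟩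
  rw [edgeCount_eq]
  simpa using SimpleGraph.card_edgeFinset_le_card_choose_two (G := G)

set_option maxHeartbeats 1000000 in
lemma exNum_succ_le {α : Type*} (F : SimpleGraph α) (n : ℕ) (hn : 1 ≤ n) :
    exNum F (n+1) ≤ exNum F n + (2 * exNum F (n+1)) / (n+1) := by
  by_cases hS : {m | ∃ G : SimpleGraph (Fin (n+1)), F.CopyFree G ∧ edgeCount G = m}.Nonempty
  · have hbdd := exSet_bdd F (n+1)
    have hmem := Nat.sSup_mem hS hbdd
    obtain ⟨G, hfree, hcard⟩ := hmem
    set e := exNum F (n+1) with he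
    rw [show sSup {m | ∃ G : SimpleGraph (Fin (n+1)), F.CopyFree G ∧ edgeCount G = m} = e from rfl]
      at hcard
    -- find a min degree vertex
    have hsum : ∑ w : Fin (n+1), G.degree w = 2 * e := by
      rw [SimpleGraph.sum_degrees_eq_twice_card_edges, ← edgeCount_eq, hcard]
    have hvex : ∃ w : Fin (n+1), (n+1) * G.degree w ≤ 2 * e := by
      obtain ⟨w, -, hw⟩ := Finset.exists_le_of_sum_le (f := fun w : Fin (n+1) => (n+1) * G.degree w)
        (g := fun _ => 2 * e) (s := Finset.univ) Finset.univ_nonempty (by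
          rw [← Finset.mul_sum, hsum, Finset.sum_const, Finset.card_univ, Fintype.card_fin,
            smul_eq_mul])
      exact ⟨w, hw⟩
    obtain ⟨v, hv⟩ := hvex
    -- the deleted graph
    set G' : SimpleGraph (Fin n) := SimpleGraph.comap (Fin.succAbove v) G with hG'
    have hfree' : F.CopyFree G' := by
      rintro ⟨φ, hφ⟩
      exact hfree ⟨(⟨Fin.succAbove v, fun {a b} h => h⟩ : G' →g G).comp φ,
        Fin.succAbove_right_injective.comp hφ⟩
    -- edge count of G'
    have hgexists : ∀ w : Fin (n+1), w ≠ v → ∃ z : Fin n, v.succAbove z = w :=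
      fun w hw => Fin.exists_succAbove_eq hw
    set g : Fin (n+1) → Fin n :=
      fun w => if h : w = v then ⟨0, hn⟩ else (hgexists w h).choose with hgdef
    have hg : ∀ w, w ≠ v → v.succAbove (g w) = w := by
      intro w hw
      rw [hgdef]
      simp only [dif_neg hw]
      exact (hgexists w hw).choose_spec
    have hmem' : ∀ e₁ ∈ G.edgeFinset.filter (fun e₁ => ¬ v ∈ e₁),
        Sym2.map g e₁ ∈ G'.edgeFinset := by
      intro e₁
      induction e₁ using Sym2.ind with
      | _ a b =>
        intro he₁
        simp only [Finset.mem_filter, SimpleGraph.mem_edgeFinset, SimpleGraph.mem_edgeSet,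
          Sym2.mem_iff] at he₁
        obtain ⟨hadj, hnv⟩ := he₁
        push_neg at hnv
        have ha : a ≠ v := fun h => hnv.1 h.symm
        have hb : b ≠ v := fun h => hnv.2 h.symm
        rw [Sym2.map_pair_eq, SimpleGraph.mem_edgeFinset, SimpleGraph.mem_edgeSet]
        show G.Adj (v.succAbove (g a)) (v.succAbove (g b))
        rw [hg a ha, hg b hb]
        exact hadj
    have hretract : ∀ e₁ ∈ G.edgeFinset.filter (fun e₁ => ¬ v ∈ e₁),
        Sym2.map v.succAbove (Sym2.map g e₁) = e₁ := by
      intro e₁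
      induction e₁ using Sym2.ind with
      | _ a b =>
        intro he₁
        simp only [Finset.mem_filter, SimpleGraph.mem_edgeFinset, SimpleGraph.mem_edgeSet,
          Sym2.mem_iff] at he₁
        obtain ⟨hadj, hnv⟩ := he₁
        push_neg at hnv
        have ha : a ≠ v := fun h => hnv.1 h.symm
        have hb : b ≠ v := fun h => hnv.2 h.symm
        rw [Sym2.map_pair_eq, Sym2.map_pair_eq, hg a ha, hg b hb]
    have hinj : Set.InjOn (Sym2.map g) ↑(G.edgeFinset.filter (fun e₁ => ¬ v ∈ e₁)) := by
      intro e₁ h1 e₂ h2 heq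
      rw [Finset.mem_coe] at h1 h2
      rw [← hretract e₁ h1, ← hretract e₂ h2, heq]
    have hcardle : (G.edgeFinset.filter (fun e₁ => ¬ v ∈ e₁)).card ≤ G'.edgeFinset.card :=
      Finset.card_le_card_of_injOn (Sym2.map g) hmem' hinj
    have hdeg : (G.edgeFinset.filter (fun e₁ => v ∈ e₁)).card = G.degree v := by
      rw [← SimpleGraph.card_incidenceFinset_eq_degree]
      congr 1
      ext e₁
      simp [SimpleGraph.mem_incidenceFinset, SimpleGraph.incidenceSet]
    have hsplit := Finset.card_filter_add_card_filter_not
      (s := G.edgeFinset) (p := fun e₁ => v ∈ e₁)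
    -- assemble
    have hGn : edgeCount G' ≤ exNum F n := le_csSup (exSet_bdd F n) ⟨G', hfree', rfl⟩
    have hdivle : G.degree v ≤ (2 * e) / (n+1) :=
      (Nat.le_div_iff_mul_le (by omega)).2 (by linarith [hv, Nat.mul_comm (n+1) (G.degree v)])
    have hc' : edgeCount G' = G'.edgeFinset.card := edgeCount_eq _
    have hc : e = G.edgeFinset.card := by rw [← hcard, edgeCount_eq]
    omega
  · rw [exNum, Set.not_nonempty_iff_eq_empty.mp hS, csSup_empty]
    simp

set_option maxHeartbeats 1000000 in
/-- `ex(n,F) - t_r(n)` is eventually equal to its limsup `c0`. -/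
theorem stmt_1 {α : Type*} (F : SimpleGraph α) (r : ℕ) (hr : 2 ≤ r)
    (hO : ExIsTuranPlusO1 F r) :
    ∃ N : ℕ, ∀ n ≥ N, (exNum F n : ℤ) = (turanNum r n : ℤ) + exC0 F r := by
  classical
  obtain ⟨C, hC⟩ := hO
  have hC0 : 0 ≤ C := le_trans (abs_nonneg _) (hC 0)
  set C' := C.toNat with hC'def
  have hCC : (C' : ℤ) = C := Int.toNat_of_nonneg hC0
  set d : ℕ → ℤ := fun n => (exNum F n : ℤ) - (turanNum r n : ℤ) with hd
  have hdb : ∀ n, |d n| ≤ C := hC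
  set N := 2*C'*r + r with hN
  have hmono : ∀ n ≥ N, d (n+1) ≤ d n := by
    intro n hn
    rw [hN] at hn
    have hn1 : 1 ≤ n := by omega
    have key1 := exNum_succ_le F n hn1
    have key2 := turan_key r hr C' n (by omega)
    rw [hCC] at key2
    have hEx : (exNum F (n+1) : ℤ) ≤ (turanNum r (n+1) : ℤ) + C := by
      have h := hC (n+1)
      rw [abs_le] at h
      linarith [h.2]
    set D := (2 * exNum F (n+1)) / (n+1) with hD
    have hDle : (D : ℤ) * ((n+1 : ℕ) : ℤ) ≤ 2 * (exNum F (n+1) : ℤ) := by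
      exact_mod_cast Nat.div_mul_le_self (2 * exNum F (n+1)) (n+1)
    have hmpos : (0:ℤ) < ((n+1 : ℕ) : ℤ) := by exact_mod_cast Nat.succ_pos n
    have hDlt : (D:ℤ) < ((turanNum r (n+1) : ℤ) - (turanNum r n : ℤ)) + 1 := by
      by_contra h
      push_neg at h
      have h2 : (((turanNum r (n+1) : ℤ) - (turanNum r n : ℤ)) + 1) * ((n+1:ℕ):ℤ)
          ≤ (D:ℤ) * ((n+1:ℕ):ℤ) := mul_le_mul_of_nonneg_right h (le_of_lt hmpos)
      nlinarith [key2, hDle, hEx, h2]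
    have hDd : (D : ℤ) ≤ (turanNum r (n+1) : ℤ) - (turanNum r n : ℤ) := by
      exact Int.lt_add_one_iff.mp hDlt
    have key1' : (exNum F (n+1) : ℤ) ≤ (exNum F n : ℤ) + (D : ℤ) := by exact_mod_cast key1
    simp only [hd]
    linarith
  -- eventual constancy
  have hanti : ∀ a b, N ≤ a → a ≤ b → d b ≤ d a := by
    intro a b ha hab
    induction b, hab using Nat.le_induction with
    | base => exact le_refl _
    | succ b hb ih => exact le_trans (hmono b (le_trans ha hb)) ih
  have hlb : ∀ n, -C ≤ d n := fun n => (abs_le.1 (hdb n)).1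
  set U : Set ℕ := {k | ∃ n, N ≤ n ∧ (d n + C).toNat = k} with hU
  have hUne : U.Nonempty := ⟨(d N + C).toNat, N, le_refl N, rfl⟩
  obtain ⟨n0, hn0N, hn0⟩ := Nat.sInf_mem hUne
  have hkey : ∀ n ≥ n0, d n = d n0 := by
    intro n hn
    have h1 : d n ≤ d n0 := hanti n0 n hn0N hn
    have h2 : sInf U ≤ (d n + C).toNat := Nat.sInf_le ⟨n, le_trans hn0N hn, rfl⟩
    rw [← hn0] at h2
    have h3 : (0:ℤ) ≤ d n + C := by linarith [hlb n]
    have h4 : (0:ℤ) ≤ d n0 + C := by linarith [hlb n0]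
    have h5 : d n0 + C ≤ d n + C := by omega
    linarith
  have hlim : exC0 F r = d n0 := by
    have hev : ∀ᶠ n in Filter.atTop, d n = d n0 :=
      Filter.eventually_atTop.2 ⟨n0, hkey⟩
    have : exC0 F r = Filter.limsup d Filter.atTop := rfl
    rw [this, Filter.limsup_congr hev, Filter.limsup_const]
  refine ⟨n0, fun n hn => ?_⟩
  have := hkey n hn
  rw [hlim]
  have hdn : d n = (exNum F n : ℤ) - (turanNum r n : ℤ) := rfl
  linarith [this]
end

section
/- Let r ≥ 2 be an integer, F a graph with ex(n,F) = t_r(n) + O(1), and c0 = limsup_{n→∞}(ex(n,F) − t_r(n)). There exists ε0 > 0 such that for every ε with 0 < ε < ε0 there is N such that for every n ≥ N and every F-free graph G on n vertices with minimum degree greater than (1 − 1/r − ε)n, any two partitions of V(G) into r parts in which every part spans at most c0 edges of G are equal as unordered partitions. -/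
open Finset SimpleGraph
open scoped Classical

section AuxStmt3

open Finset

lemma aux_degCount_eq {n : ℕ} (G : SimpleGraph (Fin n)) (v : Fin n) :
    degCount G v = G.degree v := by
  rw [degCount, Set.ncard_eq_toFinset_card', ← SimpleGraph.neighborFinset_def]
  exact G.card_neighborFinset_eq_degree v

lemma aux_deg_filter {n : ℕ} (G : SimpleGraph (Fin n)) (v : Fin n) :
    G.degree v = (univ.filter (fun w => G.Adj v w)).card := by
  rw [← SimpleGraph.card_neighborFinset_eq_degree]
  congr 1
  ext w
  simp [SimpleGraph.mem_neighborFinset]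

lemma aux_nonnbr_card {n : ℕ} (G : SimpleGraph (Fin n)) (v : Fin n) :
    (univ.filter (fun w => ¬ G.Adj v w)).card + G.degree v = n := by
  have h := Finset.card_filter_add_card_filter_not
    (s := (univ : Finset (Fin n))) (p := fun w => G.Adj v w)
  rw [aux_deg_filter]
  simp only [card_univ, Fintype.card_fin] at h
  omega

lemma aux_nbrs_le_span {n : ℕ} (G : SimpleGraph (Fin n)) (s : Finset (Fin n)) (v : Fin n)
    (hv : v ∈ s) : (s.filter (fun w => G.Adj v w)).card ≤ edgesInside G ↑s := by
  classical
  rw [edgesInside, Set.ncard_eq_toFinset_card']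
  apply Finset.card_le_card_of_injOn (fun w => s(v, w))
  · intro w hw
    simp only [Finset.mem_coe, Finset.mem_filter] at hw
    simp only [Finset.mem_coe, Set.mem_toFinset, Set.mem_setOf_eq, SimpleGraph.mem_edgeSet]
    refine ⟨hw.2, ?_⟩
    intro x hx
    rcases Sym2.mem_iff.mp hx with rfl | rfl
    · exact hv
    · exact hw.1
  · intro w _ w' _ h
    exact Sym2.congr_right.mp h

lemma aux_three_sets {n : ℕ} (A B C : Finset (Fin n)) :
    (A ∩ B).card + (A ∩ C).card ≤ (B ∩ C).card + A.card := by
  classical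
  have hsub : A ∩ B ⊆ (B ∩ C) ∪ (A \ C) := by
    intro x hx
    rw [Finset.mem_inter] at hx
    by_cases hxC : x ∈ C
    · exact Finset.mem_union_left _ (Finset.mem_inter.mpr ⟨hx.2, hxC⟩)
    · exact Finset.mem_union_right _ (Finset.mem_sdiff.mpr ⟨hx.1, hxC⟩)
  have h1 : (A ∩ B).card ≤ (B ∩ C).card + (A \ C).card :=
    le_trans (Finset.card_le_card hsub) (Finset.card_union_le _ _)
  have h2 : (A ∩ C).card + (A \ C).card = A.card := Finset.card_inter_add_card_sdiff A C
  omega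

lemma aux_filter_eq_inter {n : ℕ} (G : SimpleGraph (Fin n)) (v : Fin n) (B : Finset (Fin n)) :
    (univ.filter (fun w => ¬ G.Adj v w)) ∩ B = B.filter (fun w => ¬ G.Adj v w) := by
  ext x; simp [Finset.mem_filter, Finset.mem_inter, and_comm]

lemma aux_span_split {n : ℕ} (G : SimpleGraph (Fin n)) (B : Finset (Fin n)) (v : Fin n)
    (hv : v ∈ B) {c : ℕ} (hc : edgesInside G ↑B ≤ c) :
    B.card ≤ (B.filter (fun w => ¬ G.Adj v w)).card + c := by
  have h1 := Finset.card_filter_add_card_filter_not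
    (s := B) (p := fun w => G.Adj v w)
  have h2 : (B.filter (fun w => G.Adj v w)).card ≤ c :=
    le_trans (aux_nbrs_le_span G B v hv) hc
  omega

/-- Key counting inequality. -/
lemma aux_key {n : ℕ} (G : SimpleGraph (Fin n)) (B C : Finset (Fin n)) (v : Fin n)
    (hvB : v ∈ B) (hvC : v ∈ C) {c : ℕ}
    (hB : edgesInside G ↑B ≤ c) (hC : edgesInside G ↑C ≤ c) :
    B.card + C.card + G.degree v ≤ (B ∩ C).card + n + 2 * c := by
  classical
  have h3 := aux_three_sets (univ.filter (fun w => ¬ G.Adj v w)) B C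
  rw [aux_filter_eq_inter, aux_filter_eq_inter] at h3
  have h4 := aux_nonnbr_card G v
  have h5 := aux_span_split G B v hvB hB
  have h6 := aux_span_split G C v hvC hC
  omega

lemma aux_partition_sum {n r : ℕ} (P : Fin r → Finset (Fin n)) (hP : IsVertexPartition P) :
    ∑ i, (P i).card = n := by
  classical
  have hdisj : ∀ i ∈ (univ : Finset (Fin r)), ∀ j ∈ univ, i ≠ j →
      Disjoint (P i) (P j) := fun i _ j _ hij => hP.1 i j hij
  have hcov : Finset.univ.biUnion P = (univ : Finset (Fin n)) := by
    apply Finset.eq_univ_iff_forall.mpr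
    intro v
    obtain ⟨i, hi⟩ := hP.2 v
    exact Finset.mem_biUnion.mpr ⟨i, Finset.mem_univ i, hi⟩
  have := Finset.card_biUnion hdisj
  rw [hcov] at this
  simp only [card_univ, Fintype.card_fin] at this
  omega

end AuxStmt3

/-- uniqueness (as unordered partitions) of the partition into `r`
parts each spanning at most `c0` edges. -/
theorem stmt_3 {α : Type*} (F : SimpleGraph α) (r : ℕ) (hr : 2 ≤ r)
    (hO : ExIsTuranPlusO1 F r) :
    ∃ ε0 : ℝ, 0 < ε0 ∧ ∀ ε : ℝ, 0 < ε → ε < ε0 → ∃ N : ℕ, ∀ n ≥ N,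
      ∀ G : SimpleGraph (Fin n), F.CopyFree G →
        (∀ v, (1 - 1/(r : ℝ) - ε) * n < (degCount G v : ℝ)) →
        ∀ P Q : Fin r → Finset (Fin n), IsVertexPartition P → IsVertexPartition Q →
          (∀ i, (edgesInside G ↑(P i) : ℤ) ≤ exC0 F r) →
          (∀ i, (edgesInside G ↑(Q i) : ℤ) ≤ exC0 F r) →
          ∃ σ : Equiv.Perm (Fin r), ∀ i, Q i = P (σ i) := by
  classical
  have hr2 : (2:ℝ) ≤ (r:ℝ) := by exact_mod_cast hr
  have hrpos : (0:ℝ) < (r:ℝ) := by linarith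
  have hden : (0:ℝ) < 2*(r:ℝ)*(3*(r:ℝ)-1) := by nlinarith
  refine ⟨1 / (2*(r:ℝ)*(3*(r:ℝ)-1)), div_pos one_pos hden, ?_⟩
  intro ε hε hεu
  set c : ℕ := (exC0 F r).toNat with hcdef
  refine ⟨2*r*(3*r+1)*c + 1, ?_⟩
  intro n hn G _hfree hdeg P Q hP hQ hPc hQc
  have hc0 : (0:ℝ) ≤ (c:ℝ) := Nat.cast_nonneg c
  have hn0 : (0:ℝ) ≤ (n:ℝ) := Nat.cast_nonneg n
  have hε0 : (0:ℝ) ≤ ε := hε.le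
  have hnR : 2*(r:ℝ)*(3*(r:ℝ)+1)*(c:ℝ) + 1 ≤ (n:ℝ) := by
    have h : ((2*r*(3*r+1)*c + 1 : ℕ) : ℝ) ≤ (n:ℝ) := Nat.cast_le.mpr hn
    push_cast at h
    linarith
  have hD : ε * (2*(r:ℝ)*(3*(r:ℝ)-1)) < 1 := (lt_div_iff₀ hden).mp hεu
  have hDn : ε * (2*(r:ℝ)*(3*(r:ℝ)-1)) * (n:ℝ) ≤ (n:ℝ) := by
    nlinarith
  have hE4n : (r:ℝ)*(1/(r:ℝ))*(n:ℝ) = (n:ℝ) := by field_simp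
  have hE3n : (r:ℝ)*(r:ℝ)*(1/(r:ℝ))*(n:ℝ) = (r:ℝ)*(n:ℝ) := by field_simp
  have hE2 : 2*(r:ℝ)*(1/(r:ℝ) * (n:ℝ)) = 2*(n:ℝ) := by field_simp
  have hp1 : (0:ℝ) ≤ (r:ℝ)*(r:ℝ)*ε*(n:ℝ) :=
    mul_nonneg (mul_nonneg (mul_nonneg hrpos.le hrpos.le) hε0) hn0
  have hp2 : (0:ℝ) ≤ (r:ℝ)*ε*(n:ℝ) := mul_nonneg (mul_nonneg hrpos.le hε0) hn0
  have hp3 : (0:ℝ) ≤ (r:ℝ)*(r:ℝ)*(c:ℝ) := mul_nonneg (mul_nonneg hrpos.le hrpos.le) hc0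
  have hp4 : (0:ℝ) ≤ (r:ℝ)*(c:ℝ) := mul_nonneg hrpos.le hc0
  have hp5 : (0:ℝ) ≤ ε*(n:ℝ) := mul_nonneg hε0 hn0
  have hPc' : ∀ i, edgesInside G ↑(P i) ≤ c := by
    intro i
    have h := (hPc i).trans (Int.self_le_toNat _)
    exact_mod_cast h
  have hQc' : ∀ i, edgesInside G ↑(Q i) ≤ c := by
    intro i
    have h := (hQc i).trans (Int.self_le_toNat _)
    exact_mod_cast h
  have hdeg' : ∀ v, (1 - 1/(r:ℝ) - ε) * n < (G.degree v : ℝ) := by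
    intro v
    have h := hdeg v
    rwa [aux_degCount_eq] at h
  -- upper bound on part sizes
  have hub : ∀ (R : Fin r → Finset (Fin n)), (∀ i, edgesInside G ↑(R i) ≤ c) →
      ∀ i, ((R i).card : ℝ) ≤ (1/(r:ℝ) + ε) * n + c := by
    intro R hRc i
    rcases (R i).eq_empty_or_nonempty with he | hne
    · rw [he]
      simp only [Finset.card_empty, Nat.cast_zero]
      have h0 : (0:ℝ) ≤ (1/(r:ℝ) + ε) * n :=
        mul_nonneg (add_nonneg (by positivity) hε0) hn0
      linarith
    · obtain ⟨v, hv⟩ := hne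
      have h1 := aux_span_split G (R i) v hv (hRc i)
      have h2 : ((R i).filter (fun w => ¬ G.Adj v w)).card
          ≤ (univ.filter (fun w => ¬ G.Adj v w)).card :=
        Finset.card_le_card (Finset.filter_subset_filter _ (Finset.subset_univ _))
      have h3 := aux_nonnbr_card G v
      have h4 := hdeg' v
      have h5 : (R i).card + G.degree v ≤ n + c := by omega
      have h5' : ((R i).card : ℝ) + (G.degree v : ℝ) ≤ (n:ℝ) + (c:ℝ) := by exact_mod_cast h5
      linarith
  -- lower bound on part sizes
  have hlb : ∀ (R : Fin r → Finset (Fin n)), IsVertexPartition R →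
      (∀ i, edgesInside G ↑(R i) ≤ c) → ∀ i,
      (n:ℝ) - ((r:ℝ) - 1) * ((1/(r:ℝ) + ε) * n + c) ≤ ((R i).card : ℝ) := by
    intro R hR hRc i
    have hsum : ∑ j, ((R j).card : ℝ) = (n:ℝ) := by
      exact_mod_cast aux_partition_sum R hR
    have hsplit : ((R i).card : ℝ) + ∑ j ∈ univ.erase i, ((R j).card : ℝ) = (n:ℝ) := by
      rw [← hsum]
      exact Finset.add_sum_erase univ (fun j => ((R j).card : ℝ)) (Finset.mem_univ i)
    have h1 : ∑ j ∈ univ.erase i, ((R j).card : ℝ)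
        ≤ (univ.erase i).card • ((1/(r:ℝ) + ε) * n + c) :=
      Finset.sum_le_card_nsmul _ _ _ (fun j _ => hub R hRc j)
    rw [Finset.card_erase_of_mem (Finset.mem_univ i), Finset.card_univ, Fintype.card_fin,
      nsmul_eq_mul] at h1
    have hcast : ((r - 1 : ℕ) : ℝ) = (r:ℝ) - 1 := by
      rw [Nat.cast_sub (by omega : 1 ≤ r)]
      simp
    rw [hcast] at h1
    linarith
  -- all parts are nonempty
  have hnempty : ∀ (R : Fin r → Finset (Fin n)), IsVertexPartition R →
      (∀ i, edgesInside G ↑(R i) ≤ c) → ∀ i, (R i).Nonempty := by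
    intro R hR hRc i
    rw [← Finset.card_pos]
    by_contra h0
    push_neg at h0
    have hcard0 : ((R i).card : ℝ) = 0 := by
      have : (R i).card = 0 := by omega
      exact_mod_cast this
    have hlbi := hlb R hR hRc i
    rw [hcard0] at hlbi
    have hmul := mul_le_mul_of_nonneg_left
      (by linarith : (n:ℝ) ≤ ((r:ℝ)-1) * ((1/(r:ℝ) + ε) * n + c))
      (by linarith : (0:ℝ) ≤ 2*(r:ℝ))
    linarith [hmul, hE3n, hE4n, hDn, hnR, hp1, hp2, hp3, hp4, hp5]
  -- core claim: if P i meets Q a then P i ⊆ Q a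
  have claimC : ∀ i a, (P i ∩ Q a).Nonempty → P i ⊆ Q a := by
    intro i a hne u hu
    obtain ⟨v, hv⟩ := hne
    rw [Finset.mem_inter] at hv
    obtain ⟨b, hb⟩ := hQ.2 u
    by_cases hba : b = a
    · exact hba ▸ hb
    · exfalso
      have key1 := aux_key G (P i) (Q a) v hv.1 hv.2 (hPc' i) (hQc' a)
      have key2 := aux_key G (P i) (Q b) u hu hb (hPc' i) (hQc' b)
      have hdisj : Disjoint (P i ∩ Q a) (P i ∩ Q b) :=
        (hQ.1 a b (fun h => hba h.symm)).mono Finset.inter_subset_right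
          Finset.inter_subset_right
      have hunion : (P i ∩ Q a).card + (P i ∩ Q b).card ≤ (P i).card := by
        rw [← Finset.card_union_of_disjoint hdisj]
        exact Finset.card_le_card
          (Finset.union_subset Finset.inter_subset_left Finset.inter_subset_left)
      have key1' : ((P i).card:ℝ) + ((Q a).card:ℝ) + (G.degree v:ℝ)
          ≤ ((P i ∩ Q a).card:ℝ) + n + 2*c := by exact_mod_cast key1
      have key2' : ((P i).card:ℝ) + ((Q b).card:ℝ) + (G.degree u:ℝ)
          ≤ ((P i ∩ Q b).card:ℝ) + n + 2*c := by exact_mod_cast key2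
      have hunion' : ((P i ∩ Q a).card:ℝ) + ((P i ∩ Q b).card:ℝ) ≤ ((P i).card:ℝ) := by
        exact_mod_cast hunion
      have hdv := hdeg' v
      have hdu := hdeg' u
      have hlpi := hlb P hP hPc' i
      have hlqa := hlb Q hQ hQc' a
      have hlqb := hlb Q hQ hQc' b
      have hkey : 1/(r:ℝ) * n < 3*(r:ℝ)*c + c + (3*(r:ℝ)-1)*(ε*n) := by
        linarith [hE4n, key1', key2', hunion', hdv, hdu, hlpi, hlqa, hlqb]
      have h2r : (0:ℝ) < 2*(r:ℝ) := by linarith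
      have hmul := mul_lt_mul_of_pos_left hkey h2r
      linarith [hmul, hE2, hDn, hnR]
  have hQne : ∀ a, (Q a).Nonempty := hnempty Q hQ hQc'
  have hPne : ∀ i, (P i).Nonempty := hnempty P hP hPc'
  have hchoose : ∀ a, ∃ i, (P i ∩ Q a).Nonempty := by
    intro a
    obtain ⟨v, hv⟩ := hQne a
    obtain ⟨i, hi⟩ := hP.2 v
    exact ⟨i, v, Finset.mem_inter.mpr ⟨hi, hv⟩⟩
  choose τ hτ using hchoose
  have hsub : ∀ a, P (τ a) ⊆ Q a := fun a => claimC _ _ (hτ a)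
  have hinj : Function.Injective τ := by
    intro a a' h
    by_contra hne'
    obtain ⟨v, hv⟩ := hPne (τ a)
    exact Finset.disjoint_left.mp (hQ.1 a a' hne') (hsub a hv) (hsub a' (h ▸ hv))
  have hbij : Function.Bijective τ := Finite.injective_iff_bijective.mp hinj
  refine ⟨Equiv.ofBijective τ hbij, ?_⟩
  intro a
  show Q a = P (τ a)
  apply Finset.Subset.antisymm
  · intro w hw
    obtain ⟨j, hj⟩ := hP.2 w
    obtain ⟨a'', ha''⟩ := hbij.2 j
    have hwP : w ∈ P (τ a'') := by rw [ha'']; exact hj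
    have hwQ : w ∈ Q a'' := hsub a'' hwP
    have haa : a = a'' := by
      by_contra hne'
      exact Finset.disjoint_left.mp (hQ.1 a a'' hne') hw hwQ
    rw [haa]
    exact hwP
  · exact hsub a
end

section
/- Let r ≥ 3 and let n_1 ≥ n_2 ≥ … ≥ n_r ≥ 1 be integers with n_1 + … + n_r = n. Suppose 1 ≤ i < j ≤ r satisfy n_i − n_j ≥ 2. Then q(K_{n_1,…,n_i − 1,…,n_j + 1,…,n_r}) > q(K_{n_1,…,n_r}), where the first graph is obtained from K_{n_1,…,n_r} by decreasing the i-th part size by 1 and increasing the j-th part size by 1. -/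
open Finset SimpleGraph
open scoped Classical

open Matrix

section Spectral
variable {V : Type*} [Fintype V] [DecidableEq V] [Nonempty V]

lemma exists_max_eigen {M : Matrix V V ℝ} (hM : M.IsHermitian) :
    ∃ i₀ : V, hM.eigenvalues i₀ = sSup (spectrum ℝ M) ∧
      ∀ i : V, hM.eigenvalues i ≤ sSup (spectrum ℝ M) := by
  have hs : spectrum ℝ M = Set.range hM.eigenvalues :=
    hM.spectrum_real_eq_range_eigenvalues
  have hfin : (Set.range hM.eigenvalues).Finite := Set.finite_range _
  have hne : (Set.range hM.eigenvalues).Nonempty := Set.range_nonempty _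
  obtain ⟨i₀, hi₀⟩ := hne.csSup_mem hfin
  refine ⟨i₀, by rw [hs, hi₀], fun i => ?_⟩
  rw [hs]
  exact le_csSup hfin.bddAbove (Set.mem_range_self i)

lemma rayleigh_le_sSup {M : Matrix V V ℝ} (hM : M.IsHermitian) (y : V → ℝ) :
    y ⬝ᵥ (M *ᵥ y) ≤ sSup (spectrum ℝ M) * (y ⬝ᵥ y) := by
  obtain ⟨i₀, hi₀, hle⟩ := exists_max_eigen hM
  set lam := sSup (spectrum ℝ M) with hlam
  set U : Matrix V V ℝ := (hM.eigenvectorUnitary : Matrix V V ℝ) with hU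
  have hzt : (star U : Matrix V V ℝ) = Uᵀ := U.conjTranspose_eq_transpose_of_trivial
  have hspec : M = U * Matrix.diagonal hM.eigenvalues * Uᵀ := by
    have := hM.spectral_theorem
    rw [Unitary.conjStarAlgAut_apply, hzt] at this
    exact this
  have hvm : y ᵥ* U = Uᵀ *ᵥ y := by
    rw [← Matrix.transpose_transpose U, Matrix.vecMul_transpose, Matrix.transpose_transpose]
  have hUU : U * Uᵀ = 1 := by
    rw [← hzt]; exact (Matrix.mem_unitaryGroup_iff).mp hM.eigenvectorUnitary.2
  have h2 : (Uᵀ *ᵥ y) ⬝ᵥ (Uᵀ *ᵥ y) = y ⬝ᵥ y := by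
    rw [Matrix.dotProduct_mulVec, Matrix.vecMul_transpose, Matrix.mulVec_mulVec, hUU,
      Matrix.one_mulVec]
  have h1 : y ⬝ᵥ (M *ᵥ y) = ∑ i, hM.eigenvalues i * ((Uᵀ *ᵥ y) i * (Uᵀ *ᵥ y) i) := by
    conv_lhs => rw [hspec]
    rw [← Matrix.mulVec_mulVec, ← Matrix.mulVec_mulVec, Matrix.dotProduct_mulVec y U _, hvm]
    unfold dotProduct
    refine Finset.sum_congr rfl fun i _ => ?_
    rw [Matrix.mulVec_diagonal]
    ring
  rw [h1, ← h2, dotProduct, Finset.mul_sum]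
  refine Finset.sum_le_sum fun i _ => ?_
  exact mul_le_mul_of_nonneg_right (hle i) (mul_self_nonneg _)

lemma exists_eigvec_max {M : Matrix V V ℝ} (hM : M.IsHermitian) :
    ∃ x : V → ℝ, x ≠ 0 ∧ M *ᵥ x = sSup (spectrum ℝ M) • x := by
  obtain ⟨i₀, hi₀, _⟩ := exists_max_eigen hM
  refine ⟨⇑(hM.eigenvectorBasis i₀), ?_, by rw [hM.mulVec_eigenvectorBasis, hi₀]⟩
  intro h
  have := hM.eigenvectorBasis.toBasis.ne_zero i₀
  apply this
  ext v
  exact congrFun h v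

end Spectral
section Graph
variable {r : ℕ} (m : Fin r → ℕ)

lemma sum_sigma_fin (f : (Σ k : Fin r, Fin (m k)) → ℝ) :
    ∑ v, f v = ∑ k, ∑ t : Fin (m k), f ⟨k, t⟩ := by
  rw [← Finset.univ_sigma_univ, Finset.sum_sigma]

lemma deg_cmp (u : Σ k : Fin r, Fin (m k)) :
    degCount (completeMultipartiteGraph fun k => Fin (m k)) u + m u.1 = ∑ k, m k := by
  classical
  have h1 : (completeMultipartiteGraph fun k => Fin (m k)).neighborSet u
      = {v : Σ k : Fin r, Fin (m k) | u.1 ≠ v.1} := by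
    ext v; simp [SimpleGraph.neighborSet]
  rw [degCount, h1, Set.ncard_eq_toFinset_card', Set.toFinset_setOf, Finset.card_filter]
  rw [← Finset.univ_sigma_univ, Finset.sum_sigma]
  have h2 : ∀ k : Fin r, ∑ _t : Fin (m k), (if u.1 ≠ k then 1 else 0)
      = (if u.1 ≠ k then m k else 0) := by
    intro k
    rcases eq_or_ne u.1 k with h | h <;> simp [h]
  calc (∑ k, ∑ t : Fin (m k), if u.1 ≠ k then 1 else 0) + m u.1
      = (∑ k, if u.1 ≠ k then m k else 0) + m u.1 := by
        rw [Finset.sum_congr rfl fun k _ => h2 k]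
    _ = ∑ k, ((if u.1 ≠ k then m k else 0) + (if u.1 = k then m k else 0)) := by
        rw [Finset.sum_add_distrib, Finset.sum_ite_eq]
        simp
    _ = ∑ k, m k := by
        refine Finset.sum_congr rfl fun k _ => ?_
        rcases eq_or_ne u.1 k with h | h <;> simp [h]

lemma mulVec_cmp (y : (Σ k : Fin r, Fin (m k)) → ℝ) (u : Σ k : Fin r, Fin (m k)) :
    (signlessLaplacian (completeMultipartiteGraph fun k => Fin (m k)) *ᵥ y) u
      = (degCount (completeMultipartiteGraph fun k => Fin (m k)) u : ℝ) * y u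
        + ((∑ v, y v) - ∑ t : Fin (m u.1), y ⟨u.1, t⟩) := by
  classical
  have : (signlessLaplacian (completeMultipartiteGraph fun k => Fin (m k)) *ᵥ y) u
      = ∑ v, ((if u = v then (degCount (completeMultipartiteGraph fun k => Fin (m k)) u : ℝ)
          else 0) * y v + (if u.1 ≠ v.1 then y v else 0)) := by
    rw [Matrix.mulVec, dotProduct]
    refine Finset.sum_congr rfl fun v _ => ?_
    simp only [signlessLaplacian, Matrix.of_apply, add_mul, SimpleGraph.comap_adj, top_adj,
      ite_mul, one_mul, zero_mul]
  rw [this, Finset.sum_add_distrib]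
  congr 1
  · calc ∑ v, (if u = v then (degCount (completeMultipartiteGraph fun k => Fin (m k)) u : ℝ)
          else 0) * y v
        = ∑ v, (if u = v then (degCount (completeMultipartiteGraph
            fun k => Fin (m k)) u : ℝ) * y v else 0) := by
          refine Finset.sum_congr rfl fun v _ => ?_
          rcases eq_or_ne u v with h | h <;> simp [h]
      _ = _ := by rw [Finset.sum_ite_eq]; simp
  · rw [sum_sigma_fin]
    have h2 : ∀ k : Fin r, (∑ t : Fin (m k), if u.1 ≠ k then y ⟨k, t⟩ else 0)
        = (∑ t : Fin (m k), y ⟨k, t⟩) - (if u.1 = k then ∑ t : Fin (m k), y ⟨k, t⟩ else 0) := by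
      intro k
      rcases eq_or_ne u.1 k with h | h <;> simp [h]
    rw [Finset.sum_congr rfl fun k _ => h2 k, Finset.sum_sub_distrib, Finset.sum_ite_eq]
    simp [sum_sigma_fin m y]

end Graph

section Key
variable {r : ℕ}

lemma herm_cmp (m : Fin r → ℕ) :
    (signlessLaplacian (completeMultipartiteGraph fun k => Fin (m k))).IsHermitian := by
  ext u v
  simp only [signlessLaplacian, Matrix.conjTranspose_apply, Matrix.of_apply, star_trivial]
  rcases eq_or_ne u v with h | h
  · subst h; rfl
  · have hadj : (completeMultipartiteGraph fun k => Fin (m k)).Adj v u ↔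
        (completeMultipartiteGraph fun k => Fin (m k)).Adj u v := ⟨Adj.symm, Adj.symm⟩
    simp only [h, Ne.symm h, if_false, zero_add]
    rcases eq_or_ne u.1 v.1 with h2 | h2
    · rw [if_neg (by simp [h2]), if_neg (by simp [h2])]
    · rw [if_pos (by simpa using h2.symm), if_pos (by simpa using h2)]

lemma keyA (hr : 3 ≤ r) (m : Fin r → ℕ) (hpos : ∀ k, 1 ≤ m k) :
    (∑ k, (m k : ℝ)) < qRad (completeMultipartiteGraph fun k => Fin (m k)) ∧
      ∑ k, (m k : ℝ) / (qRad (completeMultipartiteGraph fun k => Fin (m k))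
        - (∑ k, (m k : ℝ)) + 2 * m k) = 1 := by
  classical
  haveI hne : Nonempty (Σ k : Fin r, Fin (m k)) :=
    ⟨⟨⟨0, by omega⟩, ⟨0, hpos _⟩⟩⟩
  set G := completeMultipartiteGraph fun k => Fin (m k) with hG
  set Q := signlessLaplacian G with hQdef
  set lam := qRad G with hlam
  set n : ℝ := ∑ k, (m k : ℝ) with hn
  have hQ : Q.IsHermitian := herm_cmp m
  -- real degree formula
  have hdeg : ∀ u : Σ k : Fin r, Fin (m k), (degCount G u : ℝ) = n - m u.1 := by
    intro u
    have := deg_cmp m u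
    have : ((degCount G u + m u.1 : ℕ) : ℝ) = ((∑ k, m k : ℕ) : ℝ) := by rw [this]
    push_cast at this
    rw [hn]; linarith
  have hmnn : ∀ k : Fin r, (1:ℝ) ≤ m k := fun k => by exact_mod_cast hpos k
  have hpair : ∀ a b : Fin r, a ≠ b → (m a : ℝ) + m b ≤ n := by
    intro a b hab
    have h : ∑ k ∈ ({a, b} : Finset (Fin r)), (m k : ℝ) ≤ ∑ k, (m k : ℝ) :=
      Finset.sum_le_sum_of_subset_of_nonneg (Finset.subset_univ _)
        (fun k _ _ => by positivity)
    rw [Finset.sum_pair hab] at h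
    rw [hn]; exact h
  -- Rayleigh lower bound : lam ≥ n - m k0 + 1 for every k0
  have hlower : ∀ k0 : Fin r, n - m k0 + 1 ≤ lam := by
    intro k0
    set u₀ : Σ k : Fin r, Fin (m k) := ⟨k0, ⟨0, hpos k0⟩⟩ with hu₀
    set d : ℝ := n - m k0 with hd
    obtain ⟨k1, hk1⟩ : ∃ k1 : Fin r, k1 ≠ k0 :=
      Fintype.exists_ne_of_one_lt_card (by simp; omega) k0
    have hd1 : (1:ℝ) ≤ d := by
      have := hpair k1 k0 hk1
      have := hmnn k1
      rw [hd]; linarith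
    set y : (Σ k : Fin r, Fin (m k)) → ℝ :=
      fun v => if v = u₀ then d else if v.1 = k0 then 0 else 1 with hy
    have hynn : ∀ v, 0 ≤ y v := by
      intro v
      rw [hy]
      rcases eq_or_ne v u₀ with h | h
      · simp [h]; linarith
      · rcases eq_or_ne v.1 k0 with h2 | h2 <;> simp [h, h2]
    have hyu₀ : y u₀ = d := by rw [hy]; simp
    have hPk0 : (∑ t : Fin (m k0), y ⟨k0, t⟩) = d := by
      have hterm : ∀ t : Fin (m k0), y ⟨k0, t⟩ = if t = ⟨0, hpos k0⟩ then d else 0 := by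
        intro t
        rw [hy]
        simp only [hu₀, Sigma.mk.inj_iff, heq_eq_eq, true_and]
        simp
      rw [Finset.sum_congr rfl fun t _ => hterm t, Finset.sum_ite_eq']
      simp
    have hPne : ∀ k : Fin r, k ≠ k0 → (∑ t : Fin (m k), y ⟨k, t⟩) = (m k : ℝ) := by
      intro k h
      have hterm : ∀ t : Fin (m k), y ⟨k, t⟩ = 1 := by
        intro t
        have hne' : (⟨k, t⟩ : Σ k, Fin (m k)) ≠ u₀ := by
          rw [hu₀]; intro hc; exact h (congrArg Sigma.fst hc)
        rw [hy]
        simp [hne', h]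
      rw [Finset.sum_congr rfl fun t _ => hterm t]
      simp
    have hP : ∀ k : Fin r, (∑ t : Fin (m k), y ⟨k, t⟩)
        = if k = k0 then d else (m k : ℝ) := by
      intro k
      rcases eq_or_ne k k0 with h | h
      · rw [if_pos h]; subst h; exact hPk0
      · rw [if_neg h]; exact hPne k h
    have hS : ∑ v, y v = 2 * d := by
      rw [sum_sigma_fin m y, Finset.sum_congr rfl fun k _ => hP k]
      have : ∀ k : Fin r, (if k = k0 then d else (m k:ℝ))
          = (m k : ℝ) + (if k = k0 then d - m k else 0) := by
        intro k; rcases eq_or_ne k k0 with h | h <;> simp [h]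
      rw [Finset.sum_congr rfl fun k _ => this k, Finset.sum_add_distrib,
        Finset.sum_ite_eq']
      simp only [Finset.mem_univ, if_true, ← hn]
      rw [hd]; ring
    have hpoint : ∀ v, (d + 1) * y v ≤ (signlessLaplacian G *ᵥ y) v := by
      intro v
      rw [hG, mulVec_cmp m y v, ← hG]
      rw [hdeg v, hS, hP v.1]
      rcases eq_or_ne v u₀ with h | h
      · subst h
        have hfst : u₀.1 = k0 := by rw [hu₀]
        rw [hyu₀, if_pos hfst, hfst, ← hd]
        nlinarith [sq_nonneg d]
      · rcases eq_or_ne v.1 k0 with h2 | h2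
        · have hyv : y v = 0 := by simp only [hy]; rw [if_neg h, if_pos h2]
          rw [hyv, if_pos h2, mul_zero, mul_zero]
          linarith
        · have hyv : y v = 1 := by simp only [hy]; rw [if_neg h, if_neg h2]
          rw [hyv, if_neg h2, mul_one, mul_one]
          have hp := hpair v.1 k0 h2
          have h1 := hmnn v.1
          have h0 := hmnn k0
          rw [hd]; linarith
    have h1 : (d + 1) * (y ⬝ᵥ y) ≤ y ⬝ᵥ (signlessLaplacian G *ᵥ y) := by
      rw [dotProduct, dotProduct, Finset.mul_sum]
      refine Finset.sum_le_sum fun v _ => ?_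
      calc (d+1) * (y v * y v) = y v * ((d+1) * y v) := by ring
        _ ≤ y v * (signlessLaplacian G *ᵥ y) v :=
            mul_le_mul_of_nonneg_left (hpoint v) (hynn v)
    have h2 : y ⬝ᵥ (signlessLaplacian G *ᵥ y) ≤ lam * (y ⬝ᵥ y) :=
      rayleigh_le_sSup (herm_cmp m) y
    have hyy : 0 < y ⬝ᵥ y := by
      have hterm : y u₀ * y u₀ ≤ ∑ v, y v * y v :=
        Finset.single_le_sum (fun v _ => mul_self_nonneg (y v)) (Finset.mem_univ u₀)
      rw [dotProduct]
      have : (1:ℝ) ≤ y u₀ * y u₀ := by rw [hyu₀]; nlinarith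
      linarith
    have : d + 1 ≤ lam := by
      have := h1.trans h2
      nlinarith
    rw [hd] at this; linarith
  -- eigenvector
  obtain ⟨x, hx0, hxeq⟩ := exists_eigvec_max hQ
  have hxeq' : signlessLaplacian G *ᵥ x = lam • x := hxeq
  have hconst : ∀ (k : Fin r) (t t' : Fin (m k)), x ⟨k, t⟩ = x ⟨k, t'⟩ := by
    intro k t t'
    have e1 := congrFun hxeq' ⟨k, t⟩
    have e2 := congrFun hxeq' ⟨k, t'⟩
    rw [hG, mulVec_cmp m x ⟨k, t⟩, ← hG] at e1
    rw [hG, mulVec_cmp m x ⟨k, t'⟩, ← hG] at e2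
    rw [hdeg] at e1 e2
    simp only [Pi.smul_apply, smul_eq_mul] at e1 e2
    have hlk := hlower k
    have hfac : (lam - (n - m k)) * (x ⟨k, t⟩ - x ⟨k, t'⟩) = 0 := by
      linear_combination e2 - e1
    have hne0 : lam - (n - m k) ≠ 0 := by
      intro hc; rw [sub_eq_zero] at hc; linarith
    rcases mul_eq_zero.mp hfac with h | h
    · exact absurd h hne0
    · linarith
  set a : Fin r → ℝ := fun k => x ⟨k, ⟨0, hpos k⟩⟩ with ha
  have hPx : ∀ k : Fin r, (∑ t : Fin (m k), x ⟨k, t⟩) = (m k : ℝ) * a k := by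
    intro k
    rw [Finset.sum_congr rfl fun t _ => hconst k t ⟨0, hpos k⟩]
    simp [ha, mul_comm]
  set S : ℝ := ∑ k, (m k : ℝ) * a k with hSdef
  have hSx : ∑ v, x v = S := by
    rw [sum_sigma_fin m x, Finset.sum_congr rfl fun k _ => hPx k]
  have hEq : ∀ k : Fin r, (lam - n + 2 * m k) * a k = S := by
    intro k
    have haa : x ⟨k, ⟨0, hpos k⟩⟩ = a k := rfl
    have e1 := congrFun hxeq' ⟨k, ⟨0, hpos k⟩⟩
    rw [hG, mulVec_cmp m x ⟨k, ⟨0, hpos k⟩⟩, ← hG] at e1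
    rw [hdeg] at e1
    simp only [Pi.smul_apply, smul_eq_mul] at e1
    rw [hSx, hPx k, haa] at e1
    linear_combination -e1
  have hDpos : ∀ k : Fin r, 0 < lam - n + 2 * m k := by
    intro k
    have := hlower k
    have := hmnn k
    linarith
  have hSne : S ≠ 0 := by
    intro hc
    apply hx0
    funext v
    rcases v with ⟨k, t⟩
    have h1 : a k = 0 := by
      have := hEq k
      rw [hc] at this
      exact (mul_eq_zero.mp this).resolve_left (ne_of_gt (hDpos k))
    have := hconst k t ⟨0, hpos k⟩
    simp only [Pi.zero_apply]
    rw [this]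
    exact h1
  have hsum : ∑ k, (m k : ℝ) / (lam - n + 2 * m k) = 1 := by
    have hmul : (∑ k, (m k : ℝ) / (lam - n + 2 * m k)) * S = 1 * S := by
      rw [Finset.sum_mul, one_mul]
      have : ∀ k : Fin r, (m k : ℝ) / (lam - n + 2 * m k) * S = (m k : ℝ) * a k := by
        intro k
        calc (m k : ℝ) / (lam - n + 2 * m k) * S
            = (m k : ℝ) * (S / (lam - n + 2 * m k)) := by ring
          _ = (m k : ℝ) * a k := by
              rw [← hEq k, mul_div_cancel_left₀ _ (hDpos k).ne']
      rw [Finset.sum_congr rfl fun k _ => this k, ← hSdef]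
    exact mul_right_cancel₀ hSne hmul
  have hlt : n < lam := by
    by_contra hle
    push_neg at hle
    have hhalf : ∀ k : Fin r, (1:ℝ)/2 ≤ (m k : ℝ) / (lam - n + 2 * m k) := by
      intro k
      rw [le_div_iff₀ (hDpos k)]
      have := hmnn k
      nlinarith
    have : (r : ℝ) * (1/2) ≤ 1 := by
      calc (r:ℝ) * (1/2) = ∑ _k : Fin r, (1:ℝ)/2 := by
            rw [Finset.sum_const]
            simp [mul_comm]
        _ ≤ ∑ k, (m k : ℝ) / (lam - n + 2 * m k) := Finset.sum_le_sum fun k _ => hhalf k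
        _ = 1 := hsum
    have : (3:ℝ) ≤ r := by exact_mod_cast hr
    linarith
  exact ⟨hlt, hsum⟩

end Key

lemma halg (A B c : ℝ) (hc : 0 < c) (hB : 1 ≤ B) (hA : B + 2 ≤ A) :
    A / (c + 2*A) + B / (c + 2*B) <
      (A - 1) / (c + 2*(A-1)) + (B + 1) / (c + 2*(B+1)) := by
  have d1 : 0 < c + 2*(A-1) := by linarith
  have d2 : 0 < c + 2*(B+1) := by linarith
  have d3 : 0 < c + 2*A := by linarith
  have d4 : 0 < c + 2*B := by linarith
  have e1 : (A-1)/(c+2*(A-1)) - A/(c+2*A) = -(c/((c+2*A)*(c+2*(A-1)))) := by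
    rw [div_sub_div _ _ d1.ne' d3.ne', ← neg_div, div_eq_div_iff (mul_pos d1 d3).ne' (mul_pos d3 d1).ne']
    ring
  have e2 : (B+1)/(c+2*(B+1)) - B/(c+2*B) = c/((c+2*B)*(c+2*(B+1))) := by
    rw [div_sub_div _ _ d2.ne' d4.ne', div_eq_div_iff (mul_pos d2 d4).ne' (mul_pos d4 d2).ne']
    ring
  have hlt : (c+2*B)*(c+2*(B+1)) < (c+2*A)*(c+2*(A-1)) := by nlinarith
  have hfin : c/((c+2*A)*(c+2*(A-1))) < c/((c+2*B)*(c+2*(B+1))) :=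
    div_lt_div_of_pos_left hc (by positivity) hlt
  linarith


/-- balancing two parts of a complete multipartite graph strictly
increases the signless Laplacian spectral radius. -/
theorem stmt_7 (r : ℕ) (hr : 3 ≤ r) (nn : Fin r → ℕ)
    (hmono : ∀ i j : Fin r, i ≤ j → nn j ≤ nn i) (hpos : ∀ i, 1 ≤ nn i)
    (i j : Fin r) (hij : i < j) (hgap : nn j + 2 ≤ nn i) :
    qRad (completeMultipartiteGraph fun k => Fin (nn k)) <
      qRad (completeMultipartiteGraph fun k =>
        Fin (if k = i then nn i - 1 else if k = j then nn j + 1 else nn k)) := by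
  classical
  have hij' : i ≠ j := ne_of_lt hij
  have hji' : j ≠ i := hij'.symm
  set m' : Fin r → ℕ :=
    fun k => if k = i then nn i - 1 else if k = j then nn j + 1 else nn k with hm'
  have hpos' : ∀ k, 1 ≤ m' k := by
    intro k
    simp only [hm']
    have h1 := hpos k
    have h3 := hgap
    split_ifs <;> omega
  suffices hgoal : qRad (completeMultipartiteGraph fun k => Fin (nn k)) <
      qRad (completeMultipartiteGraph fun k => Fin (m' k)) by
    exact hgoal
  obtain ⟨hlt1, hsum1⟩ := keyA hr nn hpos
  obtain ⟨hlt2, hsum2⟩ := keyA hr m' hpos'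
  set lam := qRad (completeMultipartiteGraph fun k => Fin (nn k)) with hlam
  set lam' := qRad (completeMultipartiteGraph fun k => Fin (m' k)) with hlam'
  set n : ℝ := ∑ k, (nn k : ℝ) with hn
  -- split sums
  have split : ∀ f : Fin r → ℝ,
      ∑ k, f k = f i + f j + ∑ k ∈ (Finset.univ.erase i).erase j, f k := by
    intro f
    have hjmem : j ∈ Finset.univ.erase i := Finset.mem_erase.mpr ⟨hji', Finset.mem_univ j⟩
    have h1 : f i + ∑ k ∈ Finset.univ.erase i, f k = ∑ k, f k :=
      Finset.add_sum_erase _ f (Finset.mem_univ i)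
    have h2 : f j + ∑ k ∈ (Finset.univ.erase i).erase j, f k
        = ∑ k ∈ Finset.univ.erase i, f k :=
      Finset.add_sum_erase _ f hjmem
    rw [← h1, ← h2]
    ring
  have hmk : ∀ k : Fin r, k ≠ i → k ≠ j → m' k = nn k := by
    intro k h1 h2
    simp only [hm']
    rw [if_neg h1, if_neg h2]
  have hmi : (m' i : ℝ) = (nn i : ℝ) - 1 := by
    simp only [hm', if_pos rfl]
    have : 1 ≤ nn i := hpos i
    push_cast [Nat.cast_sub this]
    ring
  have hmj : (m' j : ℝ) = (nn j : ℝ) + 1 := by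
    simp only [hm', if_neg hji', if_pos rfl]
    push_cast
    ring
  have hsum_eq : ∑ k, (m' k : ℝ) = n := by
    rw [hn, split (fun k => (m' k : ℝ)), split (fun k => (nn k : ℝ))]
    have hrest : ∑ k ∈ (Finset.univ.erase i).erase j, (m' k : ℝ)
        = ∑ k ∈ (Finset.univ.erase i).erase j, (nn k : ℝ) := by
      refine Finset.sum_congr rfl fun k hk => ?_
      obtain ⟨hkj, hki, -⟩ : k ≠ j ∧ k ≠ i ∧ True := by
        have h1 := Finset.mem_erase.mp hk
        have h2 := Finset.mem_erase.mp h1.2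
        exact ⟨h1.1, h2.1, trivial⟩
      rw [hmk k hki hkj]
    rw [hrest, hmi, hmj]
    ring
  rw [hsum_eq] at hlt2 hsum2
  have hc : 0 < lam - n := by linarith
  have hc' : 0 < lam' - n := by linarith
  by_contra hcon
  push_neg at hcon
  -- 1 < F(lam - n) for parts m'
  have hstrict : 1 < ∑ k, (m' k : ℝ) / (lam - n + 2 * m' k) := by
    rw [← hsum1]
    rw [split (fun k => (m' k : ℝ) / (lam - n + 2 * m' k)),
      split (fun k => (nn k : ℝ) / (lam - n + 2 * nn k))]
    have hrest : ∑ k ∈ (Finset.univ.erase i).erase j, (m' k : ℝ) / (lam - n + 2 * m' k)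
        = ∑ k ∈ (Finset.univ.erase i).erase j, (nn k : ℝ) / (lam - n + 2 * nn k) := by
      refine Finset.sum_congr rfl fun k hk => ?_
      have h1 := Finset.mem_erase.mp hk
      have h2 := Finset.mem_erase.mp h1.2
      rw [hmk k h2.1 h1.1]
    have hkey := halg (nn i : ℝ) (nn j : ℝ) (lam - n) hc
      (by exact_mod_cast hpos j) (by exact_mod_cast hgap)
    simp only [hmi, hmj]
    rw [hrest]
    have lhs_eq : ((nn i : ℝ) - 1) / (lam - n + 2 * ((nn i : ℝ) - 1))
        + ((nn j : ℝ) + 1) / (lam - n + 2 * ((nn j : ℝ) + 1))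
        = ((nn i : ℝ) - 1) / (lam - n + 2*((nn i : ℝ)-1))
          + ((nn j : ℝ) + 1) / (lam - n + 2*((nn j : ℝ)+1)) := rfl
    linarith [hkey]
  -- monotonicity : since lam' ≤ lam, F(lam - n) ≤ F(lam' - n) = 1
  have hmono2 : ∑ k, (m' k : ℝ) / (lam - n + 2 * m' k)
      ≤ ∑ k, (m' k : ℝ) / (lam' - n + 2 * m' k) := by
    refine Finset.sum_le_sum fun k _ => ?_
    have hden : 0 < lam' - n + 2 * (m' k : ℝ) := by
      have : (0:ℝ) ≤ (m' k : ℝ) := Nat.cast_nonneg _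
      linarith
    apply div_le_div_of_nonneg_left (Nat.cast_nonneg _) hden
    linarith
  rw [hsum2] at hmono2
  linarith
end

section
/- Let r ≥ 3, c ≥ 0 and n ≥ 1 be integers such that n + c is divisible by r and n > (r−1)c. Then the signless Laplacian spectral radius of the complete r-partite graph with one part of size (n − (r−1)c)/r and r−1 parts each of size (n + c)/r equals ((3r−4)n + 2(r−2)c + sqrt((rn − 2(r−2)c)² − 8(r−1)(r−2)c²))/(2r). -/
open Finset SimpleGraph
open scoped Classical

open scoped Matrix

noncomputable section Stmt14Aux
namespace Stmt14

variable (rr a b nn cc : ℝ)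

def Tq : ℝ := 2*nn - a + (rr-3)*b
def Dq : ℝ := (nn - a)*(nn + (rr-3)*b) - (rr-1)*a*b
def disc : ℝ := (rr*nn - 2*(rr-2)*cc)^2 - 8*(rr-1)*(rr-2)*cc^2
def lam : ℝ := ((3*rr-4)*nn + 2*(rr-2)*cc + Real.sqrt (disc rr nn cc)) / (2*rr)

variable {rr a b nn cc : ℝ}

lemma disc_nonneg (hr : 3 ≤ rr) (hc : 0 ≤ cc) (hn : (rr-1)*cc + 1 ≤ nn) :
    0 ≤ disc rr nn cc := by
  have hY : 0 ≤ (rr^2-3*rr+4)*cc + rr := by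
    nlinarith [mul_nonneg (show (0:ℝ) ≤ rr^2-3*rr+4 by nlinarith [sq_nonneg (2*rr-3)]) hc]
  have hXY : (rr^2-3*rr+4)*cc + rr ≤ rr*nn - 2*(rr-2)*cc := by nlinarith
  have h2 : ((rr^2-3*rr+4)*cc + rr)^2 ≤ (rr*nn - 2*(rr-2)*cc)^2 := by nlinarith
  have h3 : 8*(rr-1)*(rr-2)*cc^2 ≤ ((rr^2-3*rr+4)*cc + rr)^2 := by
    nlinarith [sq_nonneg ((rr^2-3*rr)*cc), sq_nonneg cc,
      mul_nonneg (mul_nonneg hY hc) (by linarith : (0:ℝ) ≤ rr)]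
  unfold disc
  nlinarith

lemma trace_eq (hn : nn = a + (rr-1)*b) (hc : cc = b - a) :
    rr * Tq rr a b nn = (3*rr-4)*nn + 2*(rr-2)*cc := by
  subst hn hc; unfold Tq; ring

lemma disc_eq (hn : nn = a + (rr-1)*b) (hc : cc = b - a) :
    disc rr nn cc = rr^2 * ((Tq rr a b nn)^2 - 4 * Dq rr a b nn) := by
  subst hn hc; unfold disc Tq Dq; ring

lemma lam_viet (hr : 3 ≤ rr) (hc0 : 0 ≤ cc) (hn1 : (rr-1)*cc + 1 ≤ nn)
    (hn : nn = a + (rr-1)*b) (hc : cc = b - a) :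
    (lam rr nn cc)^2 - Tq rr a b nn * lam rr nn cc + Dq rr a b nn = 0 := by
  have hr0 : (2*rr) ≠ 0 := ne_of_gt (by linarith)
  have hsq : Real.sqrt (disc rr nn cc) ^ 2 = disc rr nn cc :=
    Real.sq_sqrt (disc_nonneg hr hc0 hn1)
  have h1 : 2*rr*(lam rr nn cc) = rr * Tq rr a b nn + Real.sqrt (disc rr nn cc) := by
    rw [trace_eq hn hc]; unfold lam; field_simp
  have h2 := disc_eq hn hc (rr := rr) (a := a) (b := b)
  have h4 : (2*rr)^2 * ((lam rr nn cc)^2 - Tq rr a b nn * lam rr nn cc + Dq rr a b nn) = 0 := by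
    linear_combination (2*rr*(lam rr nn cc) - rr * Tq rr a b nn + Real.sqrt (disc rr nn cc)) * h1 + hsq + h2
  have hne : (2*rr)^2 ≠ 0 := by positivity
  exact (mul_eq_zero.mp h4).resolve_left hne

lemma lam_ge_half_trace (hr : 3 ≤ rr) (hn : nn = a + (rr-1)*b) (hc : cc = b - a) :
    Tq rr a b nn / 2 ≤ lam rr nn cc := by
  have hsq : 0 ≤ Real.sqrt (disc rr nn cc) := Real.sqrt_nonneg _
  have h1 : 2*rr*(lam rr nn cc) = rr * Tq rr a b nn + Real.sqrt (disc rr nn cc) := by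
    rw [trace_eq hn hc]; unfold lam; field_simp
  nlinarith [h1, hsq]

lemma f_pos_of_gt (hr : 3 ≤ rr) (hc0 : 0 ≤ cc) (hn1 : (rr-1)*cc + 1 ≤ nn)
    (hn : nn = a + (rr-1)*b) (hc : cc = b - a) {x : ℝ} (hx : lam rr nn cc < x) :
    0 < x^2 - Tq rr a b nn * x + Dq rr a b nn := by
  have h1 := lam_viet hr hc0 hn1 hn hc
  have h2 := lam_ge_half_trace hr hn hc
  nlinarith

lemma lam_ge (hr : 3 ≤ rr) (ha : 1 ≤ a) (hb : 1 ≤ b) (hc0 : 0 ≤ cc)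
    (hn1 : (rr-1)*cc + 1 ≤ nn) (hn : nn = a + (rr-1)*b) (hc : cc = b - a) :
    nn - a ≤ lam rr nn cc := by
  by_contra h
  push_neg at h
  have h1 := f_pos_of_gt hr hc0 hn1 hn hc h
  have h2 : (nn-a)^2 - Tq rr a b nn * (nn-a) + Dq rr a b nn = -((rr-1)*a*b) := by
    unfold Tq Dq; ring
  nlinarith [mul_nonneg (mul_nonneg (by linarith : (0:ℝ) ≤ rr-1) (by linarith : (0:ℝ) ≤ a))
    (by linarith : (0:ℝ) ≤ b)]

end Stmt14
end Stmt14Aux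


-- ===== graph-side helpers =====

namespace Stmt14

variable {r : ℕ}

lemma card_fiber (sz : Fin r → ℕ) (i : Fin r) :
    Fintype.card {w : Σ k, Fin (sz k) // w.1 = i} = sz i := by
  classical
  rw [Fintype.card_subtype, Finset.card_filter]
  rw [← Finset.univ_sigma_univ, Finset.sum_sigma]
  simp [Finset.sum_ite_eq, apply_ite Finset.card]

lemma deg_cmg (sz : Fin r → ℕ) (u : Σ i, Fin (sz i)) :
    degCount (completeMultipartiteGraph fun i => Fin (sz i)) u = (∑ i, sz i) - sz u.1 := by
  classical
  rw [degCount, Set.ncard_eq_toFinset_card']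
  have h1 : (completeMultipartiteGraph fun i => Fin (sz i)).neighborSet u = {w | ¬ w.1 = u.1} := by
    ext w; simp [ne_comm]
  have h2 : ((completeMultipartiteGraph fun i => Fin (sz i)).neighborSet u).toFinset.card
      = Fintype.card {w : Σ k, Fin (sz k) // ¬ w.1 = u.1} := by
    rw [Set.toFinset_card]; exact Fintype.card_congr (Equiv.setCongr h1)
  rw [h2, Fintype.card_subtype_compl, card_fiber]
  congr 1
  rw [Fintype.card_sigma]
  simp

lemma qmulVec (sz : Fin r → ℕ) (v : (Σ i, Fin (sz i)) → ℝ) (u : Σ i, Fin (sz i)) :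
    (signlessLaplacian (completeMultipartiteGraph fun i => Fin (sz i)) *ᵥ v) u
      = (((∑ i, sz i) - sz u.1 : ℕ) : ℝ) * v u + ((∑ w, v w) - ∑ j, v ⟨u.1, j⟩) := by
  classical
  have key : (signlessLaplacian (completeMultipartiteGraph fun i => Fin (sz i)) *ᵥ v) u
      = ∑ w : (Σ i, Fin (sz i)), ((if u = w then (degCount (completeMultipartiteGraph fun i => Fin (sz i)) u : ℝ) else 0)
          + (if ¬ w.1 = u.1 then 1 else 0)) * v w := by
    rw [Matrix.mulVec, dotProduct]
    congr 1; ext w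
    simp only [signlessLaplacian, Matrix.of_apply, comap_adj, top_adj, ne_eq]
    by_cases h2 : u = w <;> by_cases h : w.1 = u.1 <;>
        simp [h2, h, eq_comm] <;>
      exact fun hh => absurd hh.symm h
  rw [key]
  simp only [add_mul, Finset.sum_add_distrib]
  congr 1
  · simp only [ite_mul, zero_mul, Finset.sum_ite_eq, Finset.mem_univ, if_true, deg_cmg]
  · have h1 : ∑ w : (Σ i, Fin (sz i)), (if ¬ w.1 = u.1 then (1:ℝ) else 0) * v w
        = ∑ w : (Σ i, Fin (sz i)), (v w - if w.1 = u.1 then v w else 0) := by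
      congr 1; ext w
      by_cases h : w.1 = u.1 <;> simp [h]
    rw [h1, Finset.sum_sub_distrib]
    congr 1
    rw [← Finset.univ_sigma_univ, Finset.sum_sigma]
    have h2 : ∀ x : Fin r, (∑ y : Fin (sz x), if x = u.1 then v ⟨x, y⟩ else 0)
        = if x = u.1 then (∑ y : Fin (sz x), v ⟨x, y⟩) else 0 := by
      intro x; split <;> simp
    simp only [h2]
    rw [Finset.sum_ite_eq', if_pos (Finset.mem_univ u.1)]

lemma mem_spectrum_iff' {V : Type*} [Fintype V] [DecidableEq V] (M : Matrix V V ℝ) (μ : ℝ) :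
    μ ∈ spectrum ℝ M ↔ ∃ v : V → ℝ, v ≠ 0 ∧ M *ᵥ v = μ • v := by
  rw [spectrum.mem_iff]
  have halg : algebraMap ℝ (Matrix V V ℝ) μ = μ • (1 : Matrix V V ℝ) :=
    Algebra.algebraMap_eq_smul_one μ
  have hmv : ∀ v : V → ℝ, (algebraMap ℝ (Matrix V V ℝ) μ - M) *ᵥ v = μ • v - M *ᵥ v := by
    intro v
    rw [Matrix.sub_mulVec, halg, Matrix.smul_mulVec, Matrix.one_mulVec]
  constructor
  · intro h
    have hdet : (algebraMap ℝ (Matrix V V ℝ) μ - M).det = 0 := by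
      by_contra hd
      exact h ((Matrix.isUnit_iff_isUnit_det _).mpr (isUnit_iff_ne_zero.mpr hd))
    obtain ⟨v, hv, hv0⟩ := Matrix.exists_mulVec_eq_zero_iff.mpr hdet
    refine ⟨v, hv, ?_⟩
    rw [hmv] at hv0
    linear_combination (norm := module) -hv0
  · rintro ⟨v, hv, hQv⟩ h
    have hdu := (Matrix.isUnit_iff_isUnit_det _).mp h
    have hdet0 : (algebraMap ℝ (Matrix V V ℝ) μ - M).det = 0 :=
      Matrix.exists_mulVec_eq_zero_iff.mp ⟨v, hv, by rw [hmv, hQv, sub_self]⟩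
    rw [hdet0] at hdu
    exact (isUnit_iff_ne_zero.mp hdu) rfl

end Stmt14


set_option maxHeartbeats 2000000 in
/-- exact formula for the signless Laplacian spectral radius of
`K_{(n-(r-1)c)/r, (n+c)/r, …, (n+c)/r}`. -/
theorem stmt_14 (r c n : ℕ) (hr : 3 ≤ r) (hn : 1 ≤ n) (hdvd : r ∣ n + c)
    (hnc : (r - 1) * c < n) :
    qRad (completeMultipartiteGraph fun i : Fin r =>
        Fin (if (i : ℕ) = 0 then (n - (r - 1) * c) / r else (n + c) / r)) =
      ((3 * (r : ℝ) - 4) * n + 2 * ((r : ℝ) - 2) * c +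
          Real.sqrt (((r : ℝ) * n - 2 * ((r : ℝ) - 2) * c) ^ 2 -
            8 * ((r : ℝ) - 1) * ((r : ℝ) - 2) * c ^ 2)) / (2 * r) := by
  classical
  have hr0 : 0 < r := by omega
  haveI : NeZero r := ⟨by omega⟩
  set A := (n - (r - 1) * c) / r with hAdef
  set B := (n + c) / r with hBdef
  set sz : Fin r → ℕ := fun i => if (i : ℕ) = 0 then A else B with hszdef
  -- nat facts
  have hrc1 : (r-1)*c = r*c - c := Nat.sub_one_mul r c
  have hcle : c ≤ r * c := Nat.le_mul_of_pos_left c hr0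
  have hBr : r * B = n + c := Nat.mul_div_cancel' hdvd
  have hsubeq : n - (r-1)*c = n + c - r*c := by omega
  have hArdvd : r ∣ n - (r-1)*c := by
    rw [hsubeq]; exact Nat.dvd_sub hdvd (dvd_mul_right r c)
  have hAr : r * A = n - (r-1)*c := Nat.mul_div_cancel' hArdvd
  have hnrn : n ≤ r * n := Nat.le_mul_of_pos_left n hr0
  have hrn1 : (r-1)*n = r*n - n := Nat.sub_one_mul r n
  have hABn : A + (r-1)*B = n := by
    have h2 : r*(A + (r-1)*B) = r*n := by
      have h3 : r*((r-1)*B) = (r-1)*(r*B) := by ring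
      have h4 : (r-1)*(n+c) = (r-1)*n + (r-1)*c := by ring
      rw [Nat.mul_add, hAr, h3, hBr, h4]
      omega
    exact Nat.eq_of_mul_eq_mul_left hr0 h2
  have hBAc : B = A + c := by
    have h2 : r*B = r*(A+c) := by
      rw [hBr, Nat.mul_add, hAr]
      omega
    exact Nat.eq_of_mul_eq_mul_left hr0 h2
  have hA1 : 1 ≤ A := by
    rcases Nat.eq_zero_or_pos A with h | h
    · rw [h, mul_zero] at hAr; omega
    · exact h
  have hB1 : 1 ≤ B := by omega
  have hszn : ∀ i : Fin r, sz i ≤ n := by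
    intro i
    have hBr1 : B ≤ (r-1)*B := Nat.le_mul_of_pos_left B (by omega)
    simp only [hszdef]
    split <;> omega
  have hsum : (∑ i : Fin r, sz i) = n := by
    rw [← Finset.add_sum_erase Finset.univ sz (Finset.mem_univ (0 : Fin r))]
    have h1 : ∀ i ∈ Finset.univ.erase (0 : Fin r), sz i = B := by
      intro i hi
      have hi0 : i ≠ 0 := (Finset.mem_erase.mp hi).1
      have : (i : ℕ) ≠ 0 := fun hh => hi0 (Fin.ext (by simp [hh]))
      simp only [hszdef]; rw [if_neg this]
    rw [Finset.sum_congr rfl h1, Finset.sum_const, Finset.card_erase_of_mem (Finset.mem_univ _),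
      Finset.card_univ, Fintype.card_fin, smul_eq_mul]
    have h0 : sz 0 = A := by simp [hszdef]
    rw [h0]
    omega
  -- real facts
  have hrR : (3:ℝ) ≤ (r:ℝ) := by exact_mod_cast hr
  have hr1R : ((r-1 : ℕ) : ℝ) = (r:ℝ) - 1 := by
    rw [Nat.cast_sub (by omega)]; norm_num
  have haR : (1:ℝ) ≤ (A:ℝ) := by exact_mod_cast hA1
  have hbR : (1:ℝ) ≤ (B:ℝ) := by exact_mod_cast hB1
  have hc0R : (0:ℝ) ≤ (c:ℝ) := Nat.cast_nonneg c
  have e1 : (n:ℝ) = (A:ℝ) + ((r:ℝ)-1)*(B:ℝ) := by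
    have := congrArg (Nat.cast : ℕ → ℝ) hABn
    push_cast at this
    rw [hr1R] at this
    linarith
  have e2 : (c:ℝ) = (B:ℝ) - (A:ℝ) := by
    have := congrArg (Nat.cast : ℕ → ℝ) hBAc
    push_cast at this
    linarith
  have hn1R : ((r:ℝ)-1)*(c:ℝ) + 1 ≤ (n:ℝ) := by
    have h2 : (r-1)*c + 1 ≤ n := hnc
    have := (Nat.cast_le (α := ℝ)).mpr h2
    push_cast at this
    rw [hr1R] at this
    linarith
  -- abbreviations
  set rr := (r:ℝ)
  set nn := (n:ℝ)
  set cc := (c:ℝ)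
  set aa := (A:ℝ)
  set bb := (B:ℝ)
  have hviet := Stmt14.lam_viet (a := aa) (b := bb) hrR hc0R hn1R e1 e2
  have hlamge := Stmt14.lam_ge hrR haR hbR hc0R hn1R e1 e2
  set lam := Stmt14.lam rr nn cc with hlamdef
  have hrhs : ((3 * rr - 4) * nn + 2 * (rr - 2) * cc +
          Real.sqrt ((rr * nn - 2 * (rr - 2) * cc) ^ 2 -
            8 * (rr - 1) * (rr - 2) * cc ^ 2)) / (2 * rr) = lam := rfl
  rw [hrhs]
  -- the matrix
  set Q := signlessLaplacian (completeMultipartiteGraph fun i : Fin r => Fin (sz i)) with hQdef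
  show sSup (spectrum ℝ Q) = lam
  -- cast of sizes
  set szR : Fin r → ℝ := fun i => if (i : ℕ) = 0 then aa else bb with hszRdef
  have hszcast : ∀ i : Fin r, ((sz i : ℕ) : ℝ) = szR i := by
    intro i; simp only [hszdef, hszRdef]; split <;> rfl
  have hszRa : ∀ i : Fin r, aa ≤ szR i := by
    intro i; simp only [hszRdef]; split
    · exact le_refl aa
    · linarith [e2, hc0R]
  have hszR0 : szR 0 = aa := by
    simp only [hszRdef]
    rw [if_pos (by simp)]
  -- eigen-equation extraction
  have heig : ∀ (v : ((i : Fin r) × Fin (sz i)) → ℝ) (μ : ℝ), Q *ᵥ v = μ • v →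
      ∀ u : (i : Fin r) × Fin (sz i),
        μ * v u = (nn - szR u.1) * v u + ((∑ w, v w) - ∑ j, v ⟨u.1, j⟩) := by
    intro v μ hQv u
    have h1 := Stmt14.qmulVec sz v u
    have h2 : (signlessLaplacian (completeMultipartiteGraph fun i => Fin (sz i)) *ᵥ v) u
        = μ * v u := by
      rw [← hQdef, hQv]; simp
    rw [h2, hsum, Nat.cast_sub (hszn u.1), hszcast] at h1
    exact h1
  have hkey : ∀ (v : ((i : Fin r) × Fin (sz i)) → ℝ) (μ : ℝ), Q *ᵥ v = μ • v →
      ∀ i : Fin r, (μ - nn + 2 * szR i) * (∑ j, v ⟨i, j⟩) = szR i * (∑ w, v w) := by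
    intro v μ hQv i
    have h2 : ∑ j : Fin (sz i), (μ * v ⟨i,j⟩)
        = ∑ j : Fin (sz i), ((nn - szR i) * v ⟨i,j⟩ + ((∑ w, v w) - ∑ j', v ⟨i,j'⟩)) :=
      Finset.sum_congr rfl (fun j _ => heig v μ hQv ⟨i,j⟩)
    rw [← Finset.mul_sum, Finset.sum_add_distrib, ← Finset.mul_sum, Finset.sum_const,
      Finset.card_univ, Fintype.card_fin, nsmul_eq_mul, hszcast] at h2
    linear_combination h2
  -- upper bound
  have hub : ∀ μ ∈ spectrum ℝ Q, μ ≤ lam := by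
    intro μ hμ
    by_contra hgt
    push_neg at hgt
    obtain ⟨v, hv0, hQv⟩ := (Stmt14.mem_spectrum_iff' Q μ).mp hμ
    have hdpos : ∀ i : Fin r, 0 < μ - nn + szR i := by
      intro i; have := hszRa i; linarith
    have hd2pos : ∀ i : Fin r, 0 < μ - nn + 2 * szR i := by
      intro i; have h3 := hszRa i; linarith
    rcases eq_or_ne (∑ w, v w) 0 with hS | hS
    · have hSi0 : ∀ i : Fin r, (∑ j, v ⟨i, j⟩) = 0 := by
        intro i
        have h3 := hkey v μ hQv i
        rw [hS, mul_zero] at h3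
        exact (mul_eq_zero.mp h3).resolve_left (ne_of_gt (hd2pos i))
      apply hv0
      funext u
      have h1 := heig v μ hQv u
      rw [hS, hSi0 u.1] at h1
      have h2 : (μ - nn + szR u.1) * v u = 0 := by linear_combination h1
      have h4 : v u = 0 := (mul_eq_zero.mp h2).resolve_left (ne_of_gt (hdpos u.1))
      simpa using h4
    · have h0 : (μ - nn + 2*aa) * (∑ j, v ⟨(0 : Fin r), j⟩) = aa * (∑ w, v w) := by
        have h3 := hkey v μ hQv 0
        rw [hszR0] at h3
        exact h3
      have hib : ∀ i ∈ Finset.univ.erase (0 : Fin r),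
          (μ - nn + 2*bb) * (∑ j, v ⟨i, j⟩) = bb * (∑ w, v w) := by
        intro i hi
        have hi0 : (i : ℕ) ≠ 0 := fun hh => (Finset.mem_erase.mp hi).1 (Fin.ext (by simp [hh]))
        have h3 := hkey v μ hQv i
        rw [show szR i = bb from by simp only [hszRdef]; rw [if_neg hi0]] at h3
        exact h3
      have hsum2 : (μ - nn + 2*bb) * (∑ i ∈ Finset.univ.erase (0 : Fin r), ∑ j, v ⟨i, j⟩)
          = (rr-1) * (bb * (∑ w, v w)) := by
        rw [Finset.mul_sum, Finset.sum_congr rfl hib, Finset.sum_const,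
          Finset.card_erase_of_mem (Finset.mem_univ _), Finset.card_univ, Fintype.card_fin,
          nsmul_eq_mul, hr1R]
      have hStot : (∑ j, v ⟨(0 : Fin r), j⟩) + (∑ i ∈ Finset.univ.erase (0 : Fin r), ∑ j, v ⟨i, j⟩)
          = ∑ w, v w := by
        rw [Finset.add_sum_erase _ (fun i => ∑ j, v ⟨i, j⟩) (Finset.mem_univ 0)]
        rw [← Finset.univ_sigma_univ, Finset.sum_sigma]
      have hcancel : (μ - nn + 2*aa) * (μ - nn + 2*bb) - aa * (μ - nn + 2*bb)
          - (rr-1)*bb*(μ - nn + 2*aa) = 0 := by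
        have hfin : (∑ w, v w) * ((μ - nn + 2*aa) * (μ - nn + 2*bb) - aa * (μ - nn + 2*bb)
            - (rr-1)*bb*(μ - nn + 2*aa)) = 0 := by
          linear_combination (μ - nn + 2*bb) * h0 + (μ - nn + 2*aa) * hsum2
            - (μ - nn + 2*aa) * (μ - nn + 2*bb) * hStot
        exact (mul_eq_zero.mp hfin).resolve_left hS
      have hf0 : μ^2 - Stmt14.Tq rr aa bb nn * μ + Stmt14.Dq rr aa bb nn = 0 := by
        simp only [Stmt14.Tq, Stmt14.Dq]
        linear_combination hcancel
      have hpos := Stmt14.f_pos_of_gt (a := aa) (b := bb) hrR hc0R hn1R e1 e2 hgt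
      linarith [hf0, hpos]
  -- membership
  have hmem : lam ∈ spectrum ℝ Q := by
    set x : ℝ := (rr - 1) * bb with hxdef
    set y : ℝ := lam - (nn - aa) with hydef
    set v : ((i : Fin r) × Fin (sz i)) → ℝ := fun u => if (u.1 : ℕ) = 0 then x else y with hvdef
    have hvi : ∀ (i : Fin r) (j : Fin (sz i)), v ⟨i, j⟩ = (if (i : ℕ) = 0 then x else y) := by
      intro i j; simp only [hvdef]
    have hSi : ∀ i : Fin r, (∑ j, v ⟨i, j⟩) = szR i * (if (i : ℕ) = 0 then x else y) := by
      intro i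
      rw [Finset.sum_congr rfl (fun j _ => hvi i j), Finset.sum_const, Finset.card_univ,
        Fintype.card_fin, nsmul_eq_mul, hszcast]
    have hS : (∑ w, v w) = aa * x + (rr-1)*(bb*y) := by
      rw [← Finset.univ_sigma_univ, Finset.sum_sigma]
      rw [Finset.sum_congr rfl (fun i _ => hSi i)]
      rw [← Finset.add_sum_erase _ _ (Finset.mem_univ (0 : Fin r))]
      have h1 : ∀ i ∈ Finset.univ.erase (0 : Fin r),
          szR i * (if (i : ℕ) = 0 then x else y) = bb * y := by
        intro i hi
        have hi0 : (i : ℕ) ≠ 0 := fun hh => (Finset.mem_erase.mp hi).1 (Fin.ext (by simp [hh]))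
        rw [if_neg hi0, show szR i = bb from by simp only [hszRdef]; rw [if_neg hi0]]
      rw [Finset.sum_congr rfl h1, Finset.sum_const,
        Finset.card_erase_of_mem (Finset.mem_univ _), Finset.card_univ, Fintype.card_fin,
        nsmul_eq_mul, hr1R, hszR0]
      rw [if_pos (by simp : ((0 : Fin r) : ℕ) = 0)]
    apply (Stmt14.mem_spectrum_iff' Q lam).mpr
    have hsz0pos : 0 < sz 0 := by
      have : sz 0 = A := by simp [hszdef]
      omega
    refine ⟨v, ?_, ?_⟩
    · intro h0
      have h1 : x = 0 := by simpa [hvdef] using congrFun h0 ⟨0, ⟨0, hsz0pos⟩⟩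
      rw [hxdef] at h1
      nlinarith [hbR, hrR, h1]
    · funext u
      have h1 := Stmt14.qmulVec sz v u
      rw [hsum, Nat.cast_sub (hszn u.1), hszcast] at h1
      have h2 : (Q *ᵥ v) u
          = (nn - szR u.1) * v u + ((∑ w, v w) - ∑ j, v ⟨u.1, j⟩) := by
        rw [hQdef]; exact h1
      rw [h2, hSi u.1, hS]
      simp only [Pi.smul_apply, smul_eq_mul]
      have hvu : v u = (if (u.1 : ℕ) = 0 then x else y) := by
        rcases u with ⟨i, j⟩; exact hvi i j
      rw [hvu]
      by_cases h : (u.1 : ℕ) = 0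
      · rw [if_pos h, show szR u.1 = aa from by simp only [hszRdef]; rw [if_pos h]]
        rw [hxdef, hydef]
        ring
      · rw [if_neg h, show szR u.1 = bb from by simp only [hszRdef]; rw [if_neg h]]
        have hviet2 := hviet
        simp only [Stmt14.Tq, Stmt14.Dq] at hviet2
        rw [hxdef, hydef]
        linear_combination -hviet2
  exact IsGreatest.csSup_eq ⟨hmem, hub⟩
end
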